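/- arXiv:2412.18427 — 5 statements merged into one kernel-verified Lean document; each statement's English description precedes it below -/
import Mathlib

section
/- For every bounded interval I ⊂ [0,∞) there exists a constant C > 0 such that every positive solution u of (P_λ) with λ ∈ I and u(x) < r on [0,1] satisfies |u(x)| ≤ C, |u'(x)| ≤ C, |u''(x)| ≤ C and |u'''(x)| ≤ C for all x ∈ [0,1]. -/
/-!
Write `S = u''(0) + u''(1)`. Testing `u'''' = λ f(u) ≥ 0` against the polynomials `x(1-x)²`,
`x²(1-x)`, `x(1-x)` and `x²(1-x)²` and using the clamped boundary conditions gives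
`u''(0), u''(1) ≥ 0`, `S = ∫ u'''' x(1-x)` and `∫ u'''' x²(1-x)² = 24 ∫ u ≤ 24 r`.
As `u''` is convex, `u'' ≤ S`, so `u(x) ≤ S min(x, 1-x)² / 2`: wherever `u > r/2` we get
`√r ≤ 2 √S x(1-x)`, and wherever `u ≤ r/2` monotonicity of `f` gives `u'''' ≤ λ f(r/2)`.
Comparing the weights `x(1-x)` and `x²(1-x)²` through this dichotomy yields
`S ≤ λ f(r/2) + 48 √(r S)`, hence a bound on `S`, then on `∫ u''''`, and finally on
`u'''`, `u''`, `u'`, `u` by integrating from the endpoints.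
-/

open Set Filter

/-- `u` is a positive solution of the clamped problem `u'''' = lam * f (u)` on `(0,1)`,
`u(0) = u(1) = u'(0) = u'(1) = 0`, with values in `[0, r)` (the domain of `f`). -/
def IsPosSol (f : ℝ → ℝ) (r lam : ℝ) (u : ℝ → ℝ) : Prop :=
  ContDiffOn ℝ 4 u (Set.Icc 0 1) ∧
  (∀ x ∈ Set.Icc (0:ℝ) 1, u x < r) ∧
  (∀ x ∈ Set.Ioo (0:ℝ) 1, iteratedDerivWithin 4 u (Set.Icc 0 1) x = lam * f (u x)) ∧
  u 0 = 0 ∧ u 1 = 0 ∧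
  derivWithin u (Set.Icc 0 1) 0 = 0 ∧ derivWithin u (Set.Icc 0 1) 1 = 0 ∧
  (∀ x ∈ Set.Ioo (0:ℝ) 1, 0 ≤ u x) ∧
  (∃ x ∈ Set.Ioo (0:ℝ) 1, u x ≠ 0)

open MeasureTheory (volume)
open intervalIntegral Polynomial

section Calculus

variable {f g f' g' : ℝ → ℝ} {a b : ℝ}

theorem monotoneOn_Icc_of_hasDerivAt_nonneg (hf : ContinuousOn f (Icc a b))
    (hf' : ∀ x ∈ Ioo a b, HasDerivAt f (f' x) x) (h : ∀ x ∈ Ioo a b, 0 ≤ f' x) :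
    MonotoneOn f (Icc a b) :=
  monotoneOn_of_hasDerivWithinAt_nonneg (convex_Icc a b) hf
    (by simpa using fun x hx => (hf' x hx).hasDerivWithinAt) (by simpa using h)

theorem le_of_hasDerivAt_le_of_left_le (hf : ContinuousOn f (Icc a b))
    (hg : ContinuousOn g (Icc a b)) (hf' : ∀ x ∈ Ioo a b, HasDerivAt f (f' x) x)
    (hg' : ∀ x ∈ Ioo a b, HasDerivAt g (g' x) x) (hle : ∀ x ∈ Ioo a b, f' x ≤ g' x)
    (ha : f a ≤ g a) : ∀ x ∈ Icc a b, f x ≤ g x := by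
  intro x hx
  have h := monotoneOn_Icc_of_hasDerivAt_nonneg (hg.sub hf)
    (fun y hy => (hg' y hy).sub (hf' y hy)) (fun y hy => sub_nonneg.2 (hle y hy))
    ⟨le_rfl, hx.1.trans hx.2⟩ hx hx.1
  simp only [Pi.sub_apply] at h
  linarith

theorem le_of_hasDerivAt_le_of_right_le (hf : ContinuousOn f (Icc a b))
    (hg : ContinuousOn g (Icc a b)) (hf' : ∀ x ∈ Ioo a b, HasDerivAt f (f' x) x)
    (hg' : ∀ x ∈ Ioo a b, HasDerivAt g (g' x) x) (hle : ∀ x ∈ Ioo a b, g' x ≤ f' x)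
    (hb : f b ≤ g b) : ∀ x ∈ Icc a b, f x ≤ g x := by
  intro x hx
  have h := monotoneOn_Icc_of_hasDerivAt_nonneg (hf.sub hg)
    (fun y hy => (hf' y hy).sub (hg' y hy)) (fun y hy => sub_nonneg.2 (hle y hy))
    hx ⟨hx.1.trans hx.2, le_rfl⟩ hx.2
  simp only [Pi.sub_apply] at h
  linarith

theorem abs_sub_le_of_abs_hasDerivAt_le {B : ℝ} (hf : ContinuousOn f (Icc a b))
    (hf' : ∀ x ∈ Ioo a b, HasDerivAt f (f' x) x) (hB : ∀ x ∈ Ioo a b, |f' x| ≤ B) :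
    ∀ x ∈ Icc a b, |f x - f a| ≤ B * (x - a) := by
  have hline : ∀ c s : ℝ, ∀ x ∈ Ioo a b, HasDerivAt (fun y => c + s * (y - a)) s x :=
    fun c s x _ => by simpa using ((hasDerivAt_id x).sub_const a).const_mul s |>.const_add c
  have hcont : ∀ c s : ℝ, ContinuousOn (fun y => c + s * (y - a)) (Icc a b) :=
    fun c s => by fun_prop
  intro x hx
  have hup := le_of_hasDerivAt_le_of_left_le hf (hcont (f a) B) hf' (hline _ _)
    (fun y hy => (le_abs_self _).trans (hB y hy)) (by simp) x hx
  have hlow := le_of_hasDerivAt_le_of_left_le (hcont (f a) (-B)) hf (hline _ _) hf'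
    (fun y hy => neg_le.1 ((neg_le_abs _).trans (hB y hy))) (by simp) x hx
  rw [abs_le]
  constructor <;> linarith

theorem strictMonoOn_of_derivWithin_pos {f : ℝ → ℝ} {s : Set ℝ} (hs : Convex ℝ s)
    (hf : ContinuousOn f s) (hf' : ∀ x ∈ interior s, 0 < derivWithin f s x) :
    StrictMonoOn f s :=
  strictMonoOn_of_deriv_pos hs hf fun x hx => by
    rw [← derivWithin_of_mem_nhds (mem_interior_iff_mem_nhds.1 hx)]
    exact hf' x hx

theorem integral_nonneg_of_forall_Ioo {f : ℝ → ℝ} {a b : ℝ} (hab : a ≤ b)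
    (hf : IntervalIntegrable f volume a b) (h : ∀ x ∈ Ioo a b, 0 ≤ f x) :
    0 ≤ ∫ x in a..b, f x := by
  simpa using integral_mono_on_of_le_Ioo hab intervalIntegrable_const hf h

end Calculus

theorem le_two_mul_mul_one_sub {a s x : ℝ} (hx : x ∈ Icc (0:ℝ) 1)
    (h₀ : a ≤ s * x) (h₁ : a ≤ s * (1 - x)) : a ≤ 2 * s * (x * (1 - x)) := by
  obtain ⟨hx₀, hx₁⟩ := hx
  rcases le_total x (1 / 2) with h | h
  · nlinarith
  · nlinarith

theorem le_add_sqrt_of_sq_le {s b K : ℝ} (hb : 0 ≤ b) (h : s ^ 2 ≤ K + b * s) :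
    s ≤ b + √K := by
  rcases le_total s b with hsb | hbs
  · linarith [Real.sqrt_nonneg K]
  · have : s - b ≤ √K := Real.le_sqrt_of_sq_le (by nlinarith)
    linarith

/-- `D k` models the `k`-th derivative on `[0,1]` of a `C⁴` function `D 0` satisfying the clamped
boundary conditions. -/
structure IsClampedJet (D : ℕ → ℝ → ℝ) : Prop where
  continuousOn : ∀ k ≤ 4, ContinuousOn (D k) (Icc 0 1)
  hasDerivAt : ∀ k < 4, ∀ x ∈ Ioo (0:ℝ) 1, HasDerivAt (D k) (D (k + 1) x) x
  zero_left : D 0 0 = 0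
  zero_right : D 0 1 = 0
  deriv_zero_left : D 1 0 = 0
  deriv_zero_right : D 1 1 = 0

namespace IsClampedJet

variable {D : ℕ → ℝ → ℝ}

theorem intervalIntegrable_mul (hD : IsClampedJet D) {k : ℕ} (hk : k ≤ 4) {w : ℝ → ℝ}
    (hw : ContinuousOn w (Icc 0 1)) : IntervalIntegrable (fun x => D k x * w x) volume 0 1 :=
  ((hD.continuousOn k hk).mul hw).intervalIntegrable_of_Icc zero_le_one

theorem integral_mul_eval (hD : IsClampedJet D) (p : ℝ[X]) :
    ∫ x in (0:ℝ)..1, D 4 x * p.eval x =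
      D 3 1 * p.eval 1 - D 3 0 * p.eval 0 - D 2 1 * p.derivative.eval 1
        + D 2 0 * p.derivative.eval 0
        + ∫ x in (0:ℝ)..1, D 0 x * p.derivative.derivative.derivative.derivative.eval x := by
  have hc : ∀ k ≤ 4, ∀ q : ℝ[X], ContinuousOn (fun x => D k x * q.eval x) (Icc 0 1) :=
    fun k hk q => (hD.continuousOn k hk).mul q.continuous.continuousOn
  have hG : ∀ x ∈ Ioo (0:ℝ) 1, HasDerivAt
      (fun x => D 3 x * p.eval x - D 2 x * p.derivative.eval x
        + D 1 x * p.derivative.derivative.eval x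
        - D 0 x * p.derivative.derivative.derivative.eval x)
      (D 4 x * p.eval x - D 0 x * p.derivative.derivative.derivative.derivative.eval x) x := by
    intro x hx
    have hd : ∀ k < 4, HasDerivAt (fun y => D k y) (D (k + 1) x) x :=
      fun k hk => hD.hasDerivAt k hk x hx
    refine (((((hd 3 (by norm_num)).mul (p.hasDerivAt x)).sub
      ((hd 2 (by norm_num)).mul (p.derivative.hasDerivAt x))).add
      ((hd 1 (by norm_num)).mul (p.derivative.derivative.hasDerivAt x))).sub
      ((hd 0 (by norm_num)).mul (p.derivative.derivative.derivative.hasDerivAt x))).congr_deriv ?_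
    simp only [Nat.reduceAdd]
    ring
  have hFTC := integral_eq_sub_of_hasDerivAt_of_le zero_le_one
    ((((hc 3 (by norm_num) _).sub (hc 2 (by norm_num) _)).add (hc 1 (by norm_num) _)).sub
      (hc 0 (by norm_num) _)) hG
    (((hc 4 le_rfl _).sub (hc 0 (by norm_num) _)).intervalIntegrable_of_Icc zero_le_one)
  rw [integral_sub (hD.intervalIntegrable_mul le_rfl p.continuous.continuousOn)
    (hD.intervalIntegrable_mul (by norm_num) (Polynomial.continuous _).continuousOn)] at hFTC
  simp only [Pi.sub_apply, Pi.add_apply, hD.zero_left, hD.zero_right, hD.deriv_zero_left,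
    hD.deriv_zero_right, zero_mul, sub_zero, add_zero] at hFTC
  linarith

theorem deriv_two_zero_eq (hD : IsClampedJet D) :
    D 2 0 = ∫ x in (0:ℝ)..1, D 4 x * (x * (1 - x) ^ 2) := by
  have h := hD.integral_mul_eval (X * (1 - X) ^ 2)
  simp [derivative_mul, derivative_pow] at h
  exact h.symm

theorem deriv_two_one_eq (hD : IsClampedJet D) :
    D 2 1 = ∫ x in (0:ℝ)..1, D 4 x * (x ^ 2 * (1 - x)) := by
  have h := hD.integral_mul_eval (X ^ 2 * (1 - X))
  simp [derivative_mul, derivative_pow] at h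
  exact h.symm

theorem deriv_two_add_eq (hD : IsClampedJet D) :
    D 2 0 + D 2 1 = ∫ x in (0:ℝ)..1, D 4 x * (x * (1 - x)) := by
  have h := hD.integral_mul_eval (X * (1 - X))
  simp [derivative_mul] at h
  linarith

theorem integral_mul_sq_eq (hD : IsClampedJet D) :
    ∫ x in (0:ℝ)..1, D 4 x * (x * (1 - x)) ^ 2 = 24 * ∫ x in (0:ℝ)..1, D 0 x := by
  have h := hD.integral_mul_eval ((X * (1 - X)) ^ 2)
  simp [derivative_mul, derivative_pow] at h
  linarith

theorem deriv_three_one_eq (hD : IsClampedJet D) :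
    D 3 1 = (∫ x in (0:ℝ)..1, D 4 x * x) + D 2 1 - D 2 0 := by
  have h := hD.integral_mul_eval X
  simp at h
  linarith

theorem deriv_three_zero_eq (hD : IsClampedJet D) :
    D 3 0 = D 2 1 - D 2 0 - ∫ x in (0:ℝ)..1, D 4 x * (1 - x) := by
  have h := hD.integral_mul_eval (1 - X)
  simp at h
  linarith

theorem deriv_two_zero_nonneg (hD : IsClampedJet D) (h4 : ∀ x ∈ Ioo (0:ℝ) 1, 0 ≤ D 4 x) :
    0 ≤ D 2 0 := by
  rw [hD.deriv_two_zero_eq]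
  refine integral_nonneg_of_forall_Ioo zero_le_one (hD.intervalIntegrable_mul le_rfl (by fun_prop))
    fun x hx => mul_nonneg (h4 x hx) (mul_nonneg hx.1.le (sq_nonneg _))

theorem deriv_two_one_nonneg (hD : IsClampedJet D) (h4 : ∀ x ∈ Ioo (0:ℝ) 1, 0 ≤ D 4 x) :
    0 ≤ D 2 1 := by
  rw [hD.deriv_two_one_eq]
  refine integral_nonneg_of_forall_Ioo zero_le_one (hD.intervalIntegrable_mul le_rfl (by fun_prop))
    fun x hx => mul_nonneg (h4 x hx) (mul_nonneg (sq_nonneg _) (sub_nonneg.2 hx.2.le))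

theorem deriv_two_add_nonneg (hD : IsClampedJet D) (h4 : ∀ x ∈ Ioo (0:ℝ) 1, 0 ≤ D 4 x) :
    0 ≤ D 2 0 + D 2 1 :=
  add_nonneg (hD.deriv_two_zero_nonneg h4) (hD.deriv_two_one_nonneg h4)

theorem deriv_two_le (hD : IsClampedJet D) (h4 : ∀ x ∈ Ioo (0:ℝ) 1, 0 ≤ D 4 x) :
    ∀ x ∈ Icc (0:ℝ) 1, D 2 x ≤ D 2 0 + D 2 1 := by
  have hconv : ConvexOn ℝ (Icc 0 1) (D 2) :=
    convexOn_of_hasDerivWithinAt2_nonneg (convex_Icc 0 1) (hD.continuousOn 2 (by norm_num))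
      (by simpa using fun x hx => (hD.hasDerivAt 2 (by norm_num) x hx).hasDerivWithinAt)
      (by simpa using fun x hx => (hD.hasDerivAt 3 (by norm_num) x hx).hasDerivWithinAt)
      (by simpa using h4)
  intro x hx
  calc D 2 x ≤ max (D 2 0) (D 2 1) :=
        hconv.le_on_segment (by simp) (by simp) (by rwa [segment_eq_Icc zero_le_one])
    _ ≤ D 2 0 + D 2 1 := max_le (le_add_of_nonneg_right (hD.deriv_two_one_nonneg h4))
        (le_add_of_nonneg_left (hD.deriv_two_zero_nonneg h4))

theorem le_mul_sq (hD : IsClampedJet D) (h4 : ∀ x ∈ Ioo (0:ℝ) 1, 0 ≤ D 4 x) :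
    ∀ x ∈ Icc (0:ℝ) 1, D 0 x ≤ (D 2 0 + D 2 1) * x ^ 2 / 2 := by
  set S := D 2 0 + D 2 1
  have h1 : ∀ x ∈ Icc (0:ℝ) 1, D 1 x ≤ S * x :=
    le_of_hasDerivAt_le_of_left_le (hD.continuousOn 1 (by norm_num)) (by fun_prop)
      (hD.hasDerivAt 1 (by norm_num)) (fun x _ => by simpa using (hasDerivAt_id x).const_mul S)
      (fun x hx => hD.deriv_two_le h4 x (Ioo_subset_Icc_self hx)) (by simp [hD.deriv_zero_left])
  refine le_of_hasDerivAt_le_of_left_le (hD.continuousOn 0 (by norm_num)) (by fun_prop)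
    (hD.hasDerivAt 0 (by norm_num)) (fun x _ => ?_) (fun x hx => h1 x (Ioo_subset_Icc_self hx))
    (by simp [hD.zero_left])
  exact (((hasDerivAt_pow 2 x).const_mul S).div_const 2).congr_deriv (by ring)

theorem le_mul_one_sub_sq (hD : IsClampedJet D) (h4 : ∀ x ∈ Ioo (0:ℝ) 1, 0 ≤ D 4 x) :
    ∀ x ∈ Icc (0:ℝ) 1, D 0 x ≤ (D 2 0 + D 2 1) * (1 - x) ^ 2 / 2 := by
  set S := D 2 0 + D 2 1
  have h1 : ∀ x ∈ Icc (0:ℝ) 1, S * (x - 1) ≤ D 1 x :=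
    le_of_hasDerivAt_le_of_right_le (by fun_prop) (hD.continuousOn 1 (by norm_num))
      (fun x _ => by simpa using ((hasDerivAt_id x).sub_const 1).const_mul S)
      (hD.hasDerivAt 1 (by norm_num))
      (fun x hx => hD.deriv_two_le h4 x (Ioo_subset_Icc_self hx)) (by simp [hD.deriv_zero_right])
  refine le_of_hasDerivAt_le_of_right_le (hD.continuousOn 0 (by norm_num)) (by fun_prop)
    (hD.hasDerivAt 0 (by norm_num)) (fun x _ => ?_) (fun x hx => h1 x (Ioo_subset_Icc_self hx))
    (by simp [hD.zero_right])
  refine (((((hasDerivAt_id x).const_sub 1).pow 2).const_mul S).div_const 2).congr_deriv ?_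
  simp
  ring

theorem sqrt_two_mul_le (hD : IsClampedJet D) (h4 : ∀ x ∈ Ioo (0:ℝ) 1, 0 ≤ D 4 x) :
    ∀ x ∈ Icc (0:ℝ) 1, √(2 * D 0 x) ≤ 2 * √(D 2 0 + D 2 1) * (x * (1 - x)) := by
  intro x hx
  have hS := hD.deriv_two_add_nonneg h4
  refine le_two_mul_mul_one_sub hx ?_ ?_
  · rw [Real.sqrt_le_left (mul_nonneg (Real.sqrt_nonneg _) hx.1), mul_pow, Real.sq_sqrt hS]
    linarith [hD.le_mul_sq h4 x hx]
  · rw [Real.sqrt_le_left (mul_nonneg (Real.sqrt_nonneg _) (sub_nonneg.2 hx.2)), mul_pow,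
      Real.sq_sqrt hS]
    linarith [hD.le_mul_one_sub_sq h4 x hx]

theorem abs_le_abs_add (hD : IsClampedJet D) {k : ℕ} (hk : k < 4) {M : ℝ}
    (hM : ∀ x ∈ Icc (0:ℝ) 1, |D (k + 1) x| ≤ M) :
    ∀ x ∈ Icc (0:ℝ) 1, |D k x| ≤ |D k 0| + M := by
  intro x hx
  have h := abs_sub_le_of_abs_hasDerivAt_le (hD.continuousOn k hk.le) (hD.hasDerivAt k hk)
    (fun y hy => hM y (Ioo_subset_Icc_self hy)) x hx
  have hM₀ : 0 ≤ M := (abs_nonneg _).trans (hM 0 (by simp))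
  nlinarith [abs_sub_abs_le_abs_sub (D k x) (D k 0), hx.1, hx.2]

theorem abs_le_of_integral_mul_le (hD : IsClampedJet D) (h4 : ∀ x ∈ Ioo (0:ℝ) 1, 0 ≤ D 4 x)
    {B : ℝ} (hB₀ : ∫ x in (0:ℝ)..1, D 4 x * x ≤ B)
    (hB₁ : ∫ x in (0:ℝ)..1, D 4 x * (1 - x) ≤ B) :
    ∀ k ≤ 3, ∀ x ∈ Icc (0:ℝ) 1, |D k x| ≤ 2 * (D 2 0 + D 2 1) + B := by
  have h20 := hD.deriv_two_zero_nonneg h4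
  have h21 := hD.deriv_two_one_nonneg h4
  have h3 : ∀ x ∈ Icc (0:ℝ) 1, |D 3 x| ≤ D 2 0 + D 2 1 + B := by
    intro x hx
    have hmono := monotoneOn_Icc_of_hasDerivAt_nonneg (hD.continuousOn 3 (by norm_num))
      (hD.hasDerivAt 3 (by norm_num)) h4
    have hlow := hmono (by simp) hx hx.1
    have hupp := hmono hx (by simp) hx.2
    rw [abs_le]
    constructor <;> linarith [hD.deriv_three_zero_eq, hD.deriv_three_one_eq]
  have h2 : ∀ x ∈ Icc (0:ℝ) 1, |D 2 x| ≤ 2 * (D 2 0 + D 2 1) + B := fun x hx =>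
    (hD.abs_le_abs_add (k := 2) (by norm_num) h3 x hx).trans (by rw [abs_of_nonneg h20]; linarith)
  have h1 : ∀ x ∈ Icc (0:ℝ) 1, |D 1 x| ≤ 2 * (D 2 0 + D 2 1) + B := fun x hx =>
    (hD.abs_le_abs_add (k := 1) (by norm_num) h2 x hx).trans (by simp [hD.deriv_zero_left])
  have h0 : ∀ x ∈ Icc (0:ℝ) 1, |D 0 x| ≤ 2 * (D 2 0 + D 2 1) + B := fun x hx =>
    (hD.abs_le_abs_add (k := 0) (by norm_num) h1 x hx).trans (by simp [hD.zero_left])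
  intro k hk x hx
  interval_cases k
  exacts [h0 x hx, h1 x hx, h2 x hx, (h3 x hx).trans (by linarith)]

section Estimates

variable {r K : ℝ}

theorem deriv_four_le_or_sqrt_le (hD : IsClampedJet D) (h4 : ∀ x ∈ Ioo (0:ℝ) 1, 0 ≤ D 4 x)
    (hsmall : ∀ x ∈ Ioo (0:ℝ) 1, D 0 x ≤ r / 2 → D 4 x ≤ K) :
    ∀ x ∈ Ioo (0:ℝ) 1, D 4 x ≤ K ∨ √r ≤ 2 * √(D 2 0 + D 2 1) * (x * (1 - x)) := by
  intro x hx
  rcases le_or_gt (D 0 x) (r / 2) with h | h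
  · exact Or.inl (hsmall x hx h)
  · exact Or.inr ((Real.sqrt_le_sqrt (by linarith)).trans
      (hD.sqrt_two_mul_le h4 x (Ioo_subset_Icc_self hx)))

theorem integral_mul_sq_le (hD : IsClampedJet D) (h0 : ∀ x ∈ Icc (0:ℝ) 1, D 0 x ≤ r) :
    ∫ x in (0:ℝ)..1, D 4 x * (x * (1 - x)) ^ 2 ≤ 24 * r := by
  have h := integral_mono_on (μ := volume) zero_le_one
    ((hD.continuousOn 0 (by norm_num)).intervalIntegrable_of_Icc zero_le_one)
    intervalIntegrable_const h0
  rw [hD.integral_mul_sq_eq]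
  simp only [integral_const, sub_zero, smul_eq_mul, one_mul] at h
  linarith

theorem sum_deriv_two_le (hD : IsClampedJet D) (hr : 0 < r) (hK : 0 ≤ K)
    (h4 : ∀ x ∈ Ioo (0:ℝ) 1, 0 ≤ D 4 x) (h0 : ∀ x ∈ Icc (0:ℝ) 1, D 0 x ≤ r)
    (hsmall : ∀ x ∈ Ioo (0:ℝ) 1, D 0 x ≤ r / 2 → D 4 x ≤ K) :
    D 2 0 + D 2 1 ≤ (48 * √r + √K) ^ 2 := by
  set S := D 2 0 + D 2 1 with hSdef
  have hS : 0 ≤ S := hD.deriv_two_add_nonneg h4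
  have hpt : ∀ x ∈ Ioo (0:ℝ) 1, √r * (D 4 x * (x * (1 - x))) ≤
      √r * K + 2 * √S * (D 4 x * (x * (1 - x)) ^ 2) := by
    intro x hx
    have hw₀ : 0 ≤ x * (1 - x) := mul_nonneg hx.1.le (sub_nonneg.2 hx.2.le)
    have hw₁ : x * (1 - x) ≤ 1 := by nlinarith [hx.1, hx.2]
    have hD4 := h4 x hx
    have hsq : 0 ≤ 2 * √S * (D 4 x * (x * (1 - x)) ^ 2) :=
      mul_nonneg (mul_nonneg zero_le_two (Real.sqrt_nonneg S)) (mul_nonneg hD4 (sq_nonneg _))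
    rcases hD.deriv_four_le_or_sqrt_le h4 hsmall x hx with h | h
    · have : D 4 x * (x * (1 - x)) ≤ K := by nlinarith
      nlinarith [Real.sqrt_nonneg r]
    · rw [← hSdef] at h
      nlinarith [mul_le_mul_of_nonneg_right h (mul_nonneg hD4 hw₀),
        mul_nonneg (Real.sqrt_nonneg r) hK]
  have hint := integral_mono_on_of_le_Ioo zero_le_one
    ((hD.intervalIntegrable_mul le_rfl (by fun_prop)).const_mul √r)
    (intervalIntegrable_const.add
      ((hD.intervalIntegrable_mul le_rfl (by fun_prop)).const_mul _)) hpt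
  rw [integral_const_mul, ← hD.deriv_two_add_eq, integral_add intervalIntegrable_const
    ((hD.intervalIntegrable_mul le_rfl (by fun_prop)).const_mul _), integral_const,
    integral_const_mul, sub_zero, smul_eq_mul, one_mul] at hint
  have hr' : √r * √r = r := Real.mul_self_sqrt hr.le
  have hsq : √S ^ 2 ≤ K + 48 * √r * √S := by
    rw [Real.sq_sqrt hS]
    refine le_of_mul_le_mul_left ?_ (Real.sqrt_pos.2 hr)
    nlinarith [hD.integral_mul_sq_le h0, Real.sqrt_nonneg S]
  calc S = √S ^ 2 := (Real.sq_sqrt hS).symm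
    _ ≤ (48 * √r + √K) ^ 2 := pow_le_pow_left₀ (Real.sqrt_nonneg _)
        (le_add_sqrt_of_sq_le (by positivity) hsq) 2

theorem integral_mul_le (hD : IsClampedJet D) (hr : 0 < r) (hK : 0 ≤ K)
    (h4 : ∀ x ∈ Ioo (0:ℝ) 1, 0 ≤ D 4 x) (h0 : ∀ x ∈ Icc (0:ℝ) 1, D 0 x ≤ r)
    (hsmall : ∀ x ∈ Ioo (0:ℝ) 1, D 0 x ≤ r / 2 → D 4 x ≤ K) {w : ℝ → ℝ}
    (hw : ContinuousOn w (Icc 0 1)) (hw₀₁ : ∀ x ∈ Ioo (0:ℝ) 1, w x ∈ Icc (0:ℝ) 1) :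
    ∫ x in (0:ℝ)..1, D 4 x * w x ≤ K + 96 * (D 2 0 + D 2 1) := by
  set S := D 2 0 + D 2 1 with hSdef
  have hS : 0 ≤ S := hD.deriv_two_add_nonneg h4
  have hpt : ∀ x ∈ Ioo (0:ℝ) 1, r * (D 4 x * w x) ≤
      r * K + 4 * S * (D 4 x * (x * (1 - x)) ^ 2) := by
    intro x hx
    have hD4 := h4 x hx
    have hDw : D 4 x * w x ≤ D 4 x := mul_le_of_le_one_right hD4 (hw₀₁ x hx).2
    have hsq : 0 ≤ 4 * S * (D 4 x * (x * (1 - x)) ^ 2) :=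
      mul_nonneg (mul_nonneg zero_le_four hS) (mul_nonneg hD4 (sq_nonneg _))
    rcases hD.deriv_four_le_or_sqrt_le h4 hsmall x hx with h | h
    · nlinarith
    · have hr4 : r ≤ 4 * S * (x * (1 - x)) ^ 2 := by
        have := pow_le_pow_left₀ (Real.sqrt_nonneg r) h 2
        rw [Real.sq_sqrt hr.le, mul_pow, mul_pow, Real.sq_sqrt hS] at this
        linarith
      nlinarith [mul_le_mul_of_nonneg_left hDw hr.le, mul_le_mul_of_nonneg_right hr4 hD4,
        mul_nonneg hr.le hK]
  have hint := integral_mono_on_of_le_Ioo zero_le_one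
    ((hD.intervalIntegrable_mul le_rfl hw).const_mul r)
    (intervalIntegrable_const.add
      ((hD.intervalIntegrable_mul le_rfl (by fun_prop)).const_mul _)) hpt
  rw [integral_const_mul, integral_add intervalIntegrable_const
    ((hD.intervalIntegrable_mul le_rfl (by fun_prop)).const_mul _), integral_const,
    integral_const_mul, sub_zero, smul_eq_mul, one_mul] at hint
  refine le_of_mul_le_mul_left ?_ hr
  nlinarith [hD.integral_mul_sq_le h0]

theorem abs_le_of_deriv_four_le (hD : IsClampedJet D) (hr : 0 < r) (hK : 0 ≤ K)
    (h4 : ∀ x ∈ Ioo (0:ℝ) 1, 0 ≤ D 4 x) (h0 : ∀ x ∈ Icc (0:ℝ) 1, D 0 x ≤ r)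
    (hsmall : ∀ x ∈ Ioo (0:ℝ) 1, D 0 x ≤ r / 2 → D 4 x ≤ K) :
    ∀ k ≤ 3, ∀ x ∈ Icc (0:ℝ) 1, |D k x| ≤ K + 98 * (48 * √r + √K) ^ 2 := by
  have hS := hD.sum_deriv_two_le hr hK h4 h0 hsmall
  intro k hk x hx
  refine (hD.abs_le_of_integral_mul_le h4 (hD.integral_mul_le hr hK h4 h0 hsmall (w := id)
    (by fun_prop) fun y hy => Ioo_subset_Icc_self hy)
    (hD.integral_mul_le hr hK h4 h0 hsmall (w := fun y => 1 - y) (by fun_prop)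
      fun y hy => ⟨sub_nonneg.2 hy.2.le, by linarith [hy.1]⟩) k hk x hx).trans ?_
  linarith

end Estimates

end IsClampedJet

namespace IsPosSol

variable {f : ℝ → ℝ} {r lam : ℝ} {u : ℝ → ℝ}

theorem isClampedJet (hu : IsPosSol f r lam u) :
    IsClampedJet (fun k => iteratedDerivWithin k u (Icc 0 1)) := by
  obtain ⟨hC, -, -, hu0, hu1, hd0, hd1, -⟩ := hu
  have hUD : UniqueDiffOn ℝ (Icc (0:ℝ) 1) := uniqueDiffOn_Icc one_pos
  refine ⟨fun k hk => hC.continuousOn_iteratedDerivWithin (by exact_mod_cast hk) hUD,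
    fun k hk x hx => ?_, by simpa, by simpa, by simpa, by simpa⟩
  have h := (hC.differentiableOn_iteratedDerivWithin (by exact_mod_cast hk) hUD x
    (Ioo_subset_Icc_self hx)).hasDerivWithinAt
  rw [← iteratedDerivWithin_succ] at h
  exact h.hasDerivAt (Icc_mem_nhds hx.1 hx.2)

theorem mem_Ico (hu : IsPosSol f r lam u) : ∀ x ∈ Icc (0:ℝ) 1, u x ∈ Ico 0 r := by
  obtain ⟨-, hur, -, hu0, hu1, -, -, hpos, -⟩ := hu
  intro x hx
  refine ⟨?_, hur x hx⟩
  rcases hx.1.eq_or_lt with rfl | h0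
  · exact hu0.ge
  rcases hx.2.eq_or_lt with rfl | h1
  · exact hu1.ge
  exact hpos x ⟨h0, h1⟩

end IsPosSol

theorem apriori_C3_bound_general
    (f : ℝ → ℝ) (r : ℝ) (hr : 0 < r)
    (hf : ContDiffOn ℝ 1 f (Set.Ico 0 r))
    (hfpos : ∀ s ∈ Set.Ico (0:ℝ) r, 0 < f s)
    (hf' : ∀ s ∈ Set.Ioo (0:ℝ) r, 0 < derivWithin f (Set.Ico 0 r) s)
    (I : Set ℝ) (hI : I ⊆ Set.Ici 0) (hIbdd : Bornology.IsBounded I) :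
    ∃ C : ℝ, 0 < C ∧ ∀ lam ∈ I, ∀ u : ℝ → ℝ, IsPosSol f r lam u →
      ∀ k : ℕ, k ≤ 3 → ∀ x ∈ Set.Icc (0:ℝ) 1,
        |iteratedDerivWithin k u (Set.Icc 0 1) x| ≤ C := by
  obtain ⟨L, hL⟩ := hIbdd.bddAbove
  have hmono : StrictMonoOn f (Ico 0 r) :=
    strictMonoOn_of_derivWithin_pos (convex_Ico 0 r) hf.continuousOn (by simpa using hf')
  have hr2 : r / 2 ∈ Ico 0 r := ⟨by positivity, by linarith⟩
  set K := max L 0 * f (r / 2)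
  have hK : 0 ≤ K := mul_nonneg (le_max_right _ _) (hfpos _ hr2).le
  refine ⟨K + 98 * (48 * √r + √K) ^ 2, by positivity, fun lam hlam u hu => ?_⟩
  have hlam₀ : 0 ≤ lam := hI hlam
  have hjet := hu.isClampedJet
  have hrange := hu.mem_Ico
  obtain ⟨-, -, hode, -⟩ := hu
  refine hjet.abs_le_of_deriv_four_le hr hK (fun x hx => ?_)
    (fun x hx => by simpa using (hrange x hx).2.le) (fun x hx hsmall => ?_)
  · rw [hode x hx]
    exact mul_nonneg hlam₀ (hfpos _ (hrange x (Ioo_subset_Icc_self hx))).le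
  · simp only [iteratedDerivWithin_zero] at hsmall ⊢
    rw [hode x hx]
    calc lam * f (u x) ≤ lam * f (r / 2) := mul_le_mul_of_nonneg_left
          (hmono.monotoneOn (hrange x (Ioo_subset_Icc_self hx)) hr2 hsmall) hlam₀
      _ ≤ K := mul_le_mul_of_nonneg_right ((hL hlam).trans (le_max_left _ _)) (hfpos _ hr2).le

/-- A priori `C³`-bound for positive solutions, uniform over bounded intervals of `lam`. -/
theorem apriori_C3_bound
    (f : ℝ → ℝ) (r : ℝ) (hr : 0 < r)
    (hf : ContDiffOn ℝ 1 f (Set.Ico 0 r))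
    (hfpos : ∀ s ∈ Set.Ico (0:ℝ) r, 0 < f s)
    (hf' : ∀ s ∈ Set.Ioo (0:ℝ) r, 0 < derivWithin f (Set.Ico 0 r) s)
    (hlim : ∃ a > (0:ℝ), ∀ᶠ s in nhdsWithin r (Set.Iio r), a ≤ (r - s) * f s)
    (I : Set ℝ) (hI : I ⊆ Set.Ici 0) (hIbdd : Bornology.IsBounded I)
    (hIint : I.OrdConnected) :
    ∃ C : ℝ, 0 < C ∧ ∀ lam ∈ I, ∀ u : ℝ → ℝ, IsPosSol f r lam u →
      ∀ k : ℕ, k ≤ 3 → ∀ x ∈ Set.Icc (0:ℝ) 1,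
        |iteratedDerivWithin k u (Set.Icc 0 1) x| ≤ C :=
  apriori_C3_bound_general f r hr hf hfpos hf' I hI hIbdd
end

section
/- Let λ > 0 and let u ∈ C⁴([0,1]) satisfy u(0) = u(1) = u'(0) = u'(1) = 0, u ≥ 0 on (0,1), u not identically zero, 0 ≤ u(x) ≤ r on [0,1], and u''''(x) = λ f(u(x)) at every x ∈ (0,1) with u(x) < r. Then u(x) < r for all x ∈ [0,1]. -/
/-!
Let `α` be the first point where `u` reaches `r`. Since `u(0) = u(1) = 0 < r`, `α` is an interior
maximum, so `u'(α) = 0` and, `u''` being bounded, `r - u(x) ≤ C (α - x)²` to the left of `α`.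
The growth condition `f(s) ≥ a / (r - s)` near `r` then gives `u'''' ≥ λ a / (C (α - x)²)`, so
`u''' - λ a / (C (α - ·))` is nondecreasing and `u'''(x) → +∞` as `x → α⁻`, contradicting the
continuity of `u'''` at `α`.
-/

open Set Filter Topology

theorem hasDerivAt_iteratedDerivWithin {𝕜 F : Type*} [NontriviallyNormedField 𝕜]
    [NormedAddCommGroup F] [NormedSpace 𝕜 F] {f : 𝕜 → F} {s : Set 𝕜} {x : 𝕜} {n m : ℕ}
    (hf : ContDiffOn 𝕜 n f s) (hs : UniqueDiffOn 𝕜 s) (hm : m < n) (hx : s ∈ 𝓝 x) :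
    HasDerivAt (iteratedDerivWithin m f s) (iteratedDerivWithin (m + 1) f s x) x := by
  rw [iteratedDerivWithin_succ, derivWithin_of_mem_nhds hx]
  exact ((hf.differentiableOn_iteratedDerivWithin (by exact_mod_cast hm) hs) x
    (mem_of_mem_nhds hx) |>.differentiableAt hx).hasDerivAt

theorem abs_sub_le_mul_sq_of_hasDerivAt {g g' g'' : ℝ → ℝ} {x y M : ℝ} (hxy : x ≤ y)
    (hg : ∀ t ∈ Icc x y, HasDerivAt g (g' t) t) (hg' : ∀ t ∈ Icc x y, HasDerivAt g' (g'' t) t)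
    (hy : g' y = 0) (hM : ∀ t ∈ Icc x y, |g'' t| ≤ M) : |g y - g x| ≤ M * (y - x) ^ 2 := by
  have hyI : y ∈ Icc x y := right_mem_Icc.2 hxy
  have hg'_le : ∀ t ∈ Icc x y, ‖g' t‖ ≤ M * (y - x) := by
    intro t ht
    have := Convex.norm_image_sub_le_of_norm_hasDerivWithin_le
      (fun t ht ↦ (hg' t ht).hasDerivWithinAt) hM (convex_Icc x y) ht hyI
    rw [hy, zero_sub, norm_neg, Real.norm_of_nonneg (sub_nonneg.2 ht.2)] at this
    have hM0 : 0 ≤ M := (abs_nonneg _).trans (hM y hyI)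
    exact this.trans (by gcongr; exact ht.1)
  have := Convex.norm_image_sub_le_of_norm_hasDerivWithin_le
    (fun t ht ↦ (hg t ht).hasDerivWithinAt) hg'_le (convex_Icc x y) (left_mem_Icc.2 hxy) hyI
  rwa [Real.norm_of_nonneg (sub_nonneg.2 hxy), mul_assoc, ← sq, Real.norm_eq_abs] at this

theorem tendsto_atTop_of_div_sq_le_deriv {h h' : ℝ → ℝ} {a c : ℝ} (hc : 0 < c)
    (hh : ∀ᶠ t in 𝓝[<] a, HasDerivAt h (h' t) t ∧ c / (a - t) ^ 2 ≤ h' t) :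
    Tendsto h (𝓝[<] a) atTop := by
  obtain ⟨x, hxa, hx⟩ := (nhdsLT_basis a).eventually_iff.1 hh
  set g : ℝ → ℝ := fun t ↦ h t - c * (a - t)⁻¹
  have hg : ∀ t ∈ Ioo x a, HasDerivAt g (h' t - c / (a - t) ^ 2) t := by
    intro t ht
    have hinv : HasDerivAt (fun s ↦ (a - s)⁻¹) (- -1 / (a - t) ^ 2) t :=
      ((hasDerivAt_id t).const_sub a).inv (sub_ne_zero.2 ht.2.ne')
    exact ((hx ht).1.sub (hinv.const_mul c)).congr_deriv (by ring)
  have hmono : MonotoneOn g (Ioo x a) :=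
    monotoneOn_of_hasDerivWithinAt_nonneg (convex_Ioo x a)
      (fun t ht ↦ (hg t ht).continuousAt.continuousWithinAt)
      (fun t ht ↦ (hg t (interior_subset ht)).hasDerivWithinAt)
      (fun t ht ↦ sub_nonneg.2 (hx (interior_subset ht)).2)
  obtain ⟨t₀, ht₀⟩ := nonempty_Ioo.2 hxa
  have hinv : Tendsto (fun t ↦ c * (a - t)⁻¹) (𝓝[<] a) atTop := by
    refine (tendsto_inv_nhdsGT_zero.comp ?_).const_mul_atTop hc
    exact tendsto_nhdsWithin_of_tendsto_nhds_of_eventually_within _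
      (((continuous_const.sub continuous_id).tendsto' a 0 (sub_self a)).mono_left
        nhdsWithin_le_nhds)
      (eventually_nhdsWithin_of_forall fun _ ht ↦ mem_Ioi.2 (sub_pos.2 ht))
  refine tendsto_atTop_mono' _ ?_ (tendsto_atTop_add_const_left _ (g t₀) hinv)
  filter_upwards [Ioo_mem_nhdsLT ht₀.2] with t ht
  have := hmono ht₀ ⟨ht₀.1.trans ht.1, ht.2⟩ ht.1.le
  simp only [g] at this
  linarith

theorem exists_sub_le_mul_sq_of_isLocalMax {u : ℝ → ℝ} {a b c : ℝ}
    (hu : ContDiffOn ℝ 2 u (Icc a b)) (hc : c ∈ Ioo a b) (hmax : IsLocalMax u c) :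
    ∃ C > 0, ∀ x ∈ Ioo a c, u c - u x ≤ C * (c - x) ^ 2 := by
  have hs : UniqueDiffOn ℝ (Icc a b) := uniqueDiffOn_Icc (hc.1.trans hc.2)
  obtain ⟨C, hC, hbound⟩ := (isCompact_Icc.image_of_continuousOn
    (hu.continuousOn_iteratedDerivWithin le_rfl hs)).isBounded.exists_pos_norm_le
  have hderiv : ∀ m < 2, ∀ t ∈ Ioo a b, HasDerivAt (iteratedDerivWithin m u (Icc a b))
      (iteratedDerivWithin (m + 1) u (Icc a b) t) t := fun m hm t ht ↦
    hasDerivAt_iteratedDerivWithin hu hs (by exact_mod_cast hm) (Icc_mem_nhds ht.1 ht.2)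
  have hu' : ∀ t ∈ Ioo a b, HasDerivAt u (iteratedDerivWithin 1 u (Icc a b) t) t := by
    simpa only [iteratedDerivWithin_zero] using hderiv 0 two_pos
  refine ⟨C, hC, fun x hx ↦ ?_⟩
  have hsub : Icc x c ⊆ Ioo a b := Icc_subset_Ioo hx.1 hc.2
  refine (le_abs_self _).trans <| abs_sub_le_mul_sq_of_hasDerivAt hx.2.le
    (fun t ht ↦ hu' t (hsub ht)) (fun t ht ↦ hderiv 1 one_lt_two t (hsub ht))
    (hmax.hasDerivAt_eq_zero (hu' c hc)) fun t ht ↦ ?_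
  simpa only [Real.norm_eq_abs] using
    hbound _ (mem_image_of_mem _ (Ioo_subset_Icc_self (hsub ht)))

theorem exists_first_le_of_continuousOn {u : ℝ → ℝ} {a b r : ℝ}
    (hu : ContinuousOn u (Icc a b)) (h : ∃ x ∈ Icc a b, r ≤ u x) :
    ∃ c ∈ Icc a b, r ≤ u c ∧ ∀ x ∈ Ico a c, u x < r := by
  obtain ⟨c, ⟨hcI, hcr⟩, hcmin⟩ := (isCompact_Icc.of_isClosed_subset
    (hu.preimage_isClosed_of_isClosed isClosed_Icc (isClosed_Ici (a := r)))
    inter_subset_left).exists_isLeast h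
  exact ⟨c, hcI, hcr, fun x hx ↦
    lt_of_not_ge fun hx' ↦ hx.2.not_ge (hcmin ⟨⟨hx.1, hx.2.le.trans hcI.2⟩, hx'⟩)⟩

theorem solutions_stay_below_singularity_general
    (f : ℝ → ℝ) (r : ℝ) (hr : 0 < r)
    (hlim : ∃ a > (0:ℝ), ∀ᶠ s in nhdsWithin r (Set.Iio r), a ≤ (r - s) * f s)
    (lam : ℝ) (hlam : 0 < lam)
    (u : ℝ → ℝ)
    (hu : ContDiffOn ℝ 4 u (Set.Icc 0 1))
    (hbc0 : u 0 = 0) (hbc1 : u 1 = 0)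
    (hle : ∀ x ∈ Set.Icc (0:ℝ) 1, u x ≤ r)
    (heq : ∀ x ∈ Set.Ioo (0:ℝ) 1, u x < r →
      iteratedDerivWithin 4 u (Set.Icc 0 1) x = lam * f (u x)) :
    ∀ x ∈ Set.Icc (0:ℝ) 1, u x < r := by
  by_contra! hx
  obtain ⟨α, hαI, hαr, hbelow⟩ := exists_first_le_of_continuousOn hu.continuousOn hx
  have huα : u α = r := le_antisymm (hle α hαI) hαr
  have hα : α ∈ Ioo 0 1 := ⟨hαI.1.lt_of_ne (fun h ↦ by rw [← h, hbc0] at huα; linarith),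
    hαI.2.lt_of_ne (fun h ↦ by rw [h, hbc1] at huα; linarith)⟩
  have hαnhds : Icc (0 : ℝ) 1 ∈ 𝓝 α := Icc_mem_nhds hα.1 hα.2
  have hmax : IsLocalMax u α := mem_of_superset hαnhds fun x hx ↦ huα ▸ hle x hx
  obtain ⟨C, hC, hcontact⟩ := exists_sub_le_mul_sq_of_isLocalMax (hu.of_le (by norm_num)) hα hmax
  obtain ⟨a, ha, hfa⟩ := hlim
  have hleft : ∀ᶠ t in 𝓝[<] α, t ∈ Ioo 0 α := Ioo_mem_nhdsLT hα.1
  have hu_tendsto : Tendsto u (𝓝[<] α) (𝓝[<] r) :=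
    tendsto_nhdsWithin_of_tendsto_nhds_of_eventually_within _
      (huα ▸ (hu.continuousOn.continuousAt hαnhds).tendsto.mono_left nhdsWithin_le_nhds)
      (hleft.mono fun t ht ↦ hbelow t ⟨ht.1.le, ht.2⟩)
  have hs : UniqueDiffOn ℝ (Icc (0 : ℝ) 1) := uniqueDiffOn_Icc one_pos
  have hD3 : Tendsto (iteratedDerivWithin 3 u (Icc 0 1)) (𝓝[<] α) atTop := by
    refine tendsto_atTop_of_div_sq_le_deriv (h' := iteratedDerivWithin 4 u (Icc 0 1))
      (c := lam * a / C) (by positivity) ?_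
    filter_upwards [hleft, hu_tendsto.eventually hfa] with t ht hat
    have ht1 : t ∈ Ioo 0 1 := ⟨ht.1, ht.2.trans hα.2⟩
    have hur : 0 < r - u t := sub_pos.2 (hbelow t ⟨ht.1.le, ht.2⟩)
    refine ⟨hasDerivAt_iteratedDerivWithin hu hs (by norm_num) (Icc_mem_nhds ht1.1 ht1.2), ?_⟩
    have hquad : r - u t ≤ C * (α - t) ^ 2 := huα ▸ hcontact t ht
    rw [heq t ht1 (sub_pos.1 hur)]
    calc lam * a / C / (α - t) ^ 2
        = lam * (a / (C * (α - t) ^ 2)) := by rw [mul_div_assoc, mul_div_assoc, div_div]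
      _ ≤ lam * (a / (r - u t)) := by gcongr
      _ ≤ lam * f (u t) := by gcongr; exact (div_le_iff₀' hur).2 hat
  exact not_tendsto_atTop_of_tendsto_nhds ((hu.continuousOn_iteratedDerivWithin (by norm_num) hs
    |>.continuousAt hαnhds).tendsto.mono_left nhdsWithin_le_nhds) hD3

/-- Any nonnegative, not identically zero, clamped `C⁴` function `u` with `0 ≤ u ≤ r`
which satisfies `u'''' = lam * f (u)` wherever `u < r` must in fact satisfy `u < r`
everywhere on `[0,1]`. -/
theorem solutions_stay_below_singularity
    (f : ℝ → ℝ) (r : ℝ) (hr : 0 < r)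
    (hf : ContinuousOn f (Set.Ico 0 r))
    (hfpos : ∀ s ∈ Set.Ico (0:ℝ) r, 0 < f s)
    (hlim : ∃ a > (0:ℝ), ∀ᶠ s in nhdsWithin r (Set.Iio r), a ≤ (r - s) * f s)
    (lam : ℝ) (hlam : 0 < lam)
    (u : ℝ → ℝ)
    (hu : ContDiffOn ℝ 4 u (Set.Icc 0 1))
    (hbc0 : u 0 = 0) (hbc1 : u 1 = 0)
    (hbc0' : derivWithin u (Set.Icc 0 1) 0 = 0)
    (hbc1' : derivWithin u (Set.Icc 0 1) 1 = 0)
    (hnonneg : ∀ x ∈ Set.Ioo (0:ℝ) 1, 0 ≤ u x)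
    (hne : ∃ x ∈ Set.Ioo (0:ℝ) 1, u x ≠ 0)
    (hle : ∀ x ∈ Set.Icc (0:ℝ) 1, u x ≤ r)
    (heq : ∀ x ∈ Set.Ioo (0:ℝ) 1, u x < r →
      iteratedDerivWithin 4 u (Set.Icc 0 1) x = lam * f (u x)) :
    ∀ x ∈ Set.Icc (0:ℝ) 1, u x < r :=
  solutions_stay_below_singularity_general f r hr hlim lam hlam u hu hbc0 hbc1 hle heq
end

section
/- There exists λ₀ > 0 such that for every λ > λ₀ the problem (P_λ) has no positive solution u with u(x) < r on [0,1]; equivalently, the set of λ > 0 for which (P_λ) admits a positive solution with values in [0,r) is bounded above. -/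
open Set Filter

/-!
Test the equation against the weight `w(x) = x²(1-x)²`. Since `w` and `w'` vanish at both ends
and `u`, `u'` vanish there too, four integrations by parts give `∫ u'''' w = ∫ u w'''' = 24 ∫ u`.
The hypotheses on `f` make it bounded below on `[0, r)` by some `K > 0`, so
`λ K / 30 ≤ ∫ u'''' w = 24 ∫ u < 24 r`, i.e. `λ < 720 r / K`.
-/

open Topology Polynomial MeasureTheory

theorem exists_pos_forall_le_of_eventually_le_sub_mul {f : ℝ → ℝ} {r a : ℝ} (hr : 0 < r)
    (ha : 0 < a) (hf : ContinuousOn f (Ico 0 r)) (hfpos : ∀ s ∈ Ico 0 r, 0 < f s)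
    (hlim : ∀ᶠ s in 𝓝[<] r, a ≤ (r - s) * f s) :
    ∃ K > 0, ∀ s ∈ Ico 0 r, K ≤ f s := by
  obtain ⟨l, hlr, hl⟩ := mem_nhdsLT_iff_exists_Ioo_subset.1 hlim
  set t := max 0 l
  have hsub : Icc 0 t ⊆ Ico 0 r := fun s hs => ⟨hs.1, hs.2.trans_lt (max_lt hr hlr)⟩
  obtain ⟨m, hm, hmin⟩ :=
    isCompact_Icc.exists_isMinOn (nonempty_Icc.2 (le_max_left 0 l)) (hf.mono hsub)
  refine ⟨min (f m) (a / r), lt_min (hfpos m (hsub hm)) (div_pos ha hr), fun s hs => ?_⟩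
  rcases le_or_gt s t with hst | hts
  · exact (min_le_left _ _).trans (hmin ⟨hs.1, hst⟩)
  · have hnear : a ≤ (r - s) * f s := hl ⟨(le_max_right 0 l).trans_lt hts, hs.2⟩
    refine (min_le_right _ _).trans ((div_le_iff₀ hr).2 ?_)
    nlinarith [hs.1, hfpos s hs]

section Green

variable {u : ℝ → ℝ} {a b : ℝ}

theorem hasDerivAt_iteratedDerivWithin_Icc {n i : ℕ} (hu : ContDiffOn ℝ n u (Icc a b))
    (hi : i < n) {x : ℝ} (hx : x ∈ Ioo a b) :
    HasDerivAt (iteratedDerivWithin i u (Icc a b))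
      (iteratedDerivWithin (i + 1) u (Icc a b) x) x := by
  have hdiff := hu.differentiableOn_iteratedDerivWithin (by exact_mod_cast hi)
    (uniqueDiffOn_Icc (hx.1.trans hx.2)) x (Ioo_subset_Icc_self hx)
  rw [iteratedDerivWithin_succ]
  exact hdiff.hasDerivWithinAt.hasDerivAt (Icc_mem_nhds hx.1 hx.2)

noncomputable def fourthOrderBoundaryTerm (u : ℝ → ℝ) (s : Set ℝ) (p : ℝ[X]) (x : ℝ) : ℝ :=
  iteratedDerivWithin 3 u s x * p.eval x - iteratedDerivWithin 2 u s x * (derivative p).eval x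
    + iteratedDerivWithin 1 u s x * (derivative^[2] p).eval x
    - u x * (derivative^[3] p).eval x

theorem fourthOrderBoundaryTerm_eq_zero {s : Set ℝ} {p : ℝ[X]} {x : ℝ} (hu : u x = 0)
    (hu' : derivWithin u s x = 0) (hp : p.eval x = 0) (hp' : (derivative p).eval x = 0) :
    fourthOrderBoundaryTerm u s p x = 0 := by
  simp [fourthOrderBoundaryTerm, hu, hu', hp, hp']

theorem hasDerivAt_fourthOrderBoundaryTerm (hu : ContDiffOn ℝ 4 u (Icc a b)) (p : ℝ[X])
    {x : ℝ} (hx : x ∈ Ioo a b) :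
    HasDerivAt (fourthOrderBoundaryTerm u (Icc a b) p)
      (iteratedDerivWithin 4 u (Icc a b) x * p.eval x - u x * (derivative^[4] p).eval x) x := by
  have hv (i : ℕ) (hi : i < 4) := hasDerivAt_iteratedDerivWithin_Icc hu hi hx
  have hp (i : ℕ) : HasDerivAt (fun y => (derivative^[i] p).eval y)
      ((derivative^[i + 1] p).eval x) x := by
    rw [Function.iterate_succ_apply']
    exact (derivative^[i] p).hasDerivAt x
  have h := ((((hv 3 (by norm_num)).mul (hp 0)).sub ((hv 2 (by norm_num)).mul (hp 1))).add
    ((hv 1 (by norm_num)).mul (hp 2))).sub ((hv 0 (by norm_num)).mul (hp 3))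
  simp only [iteratedDerivWithin_zero, Function.iterate_zero, id] at h
  refine h.congr_deriv ?_
  simp only [Nat.reduceAdd, Function.iterate_one]
  ring

theorem integral_iteratedDerivWithin_four_mul_eval_sub (hab : a < b)
    (hu : ContDiffOn ℝ 4 u (Icc a b)) (p : ℝ[X]) :
    ∫ x in a..b, (iteratedDerivWithin 4 u (Icc a b) x * p.eval x
        - u x * (derivative^[4] p).eval x) =
      fourthOrderBoundaryTerm u (Icc a b) p b - fourthOrderBoundaryTerm u (Icc a b) p a := by
  have hcont (i : ℕ) (hi : i ≤ 4) : ContinuousOn (iteratedDerivWithin i u (Icc a b)) (Icc a b) :=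
    hu.continuousOn_iteratedDerivWithin (by exact_mod_cast hi) (uniqueDiffOn_Icc hab)
  refine intervalIntegral.integral_eq_sub_of_hasDeriv_right_of_le hab.le ?_
    (fun x hx => (hasDerivAt_fourthOrderBoundaryTerm hu p hx).hasDerivWithinAt) ?_
  · have hp (i : ℕ) := (derivative^[i] p).continuous.continuousOn (s := Icc a b)
    exact ((((hcont 3 (by norm_num)).mul (hp 0)).sub ((hcont 2 (by norm_num)).mul (hp 1))).add
      ((hcont 1 (by norm_num)).mul (hp 2))).sub (hu.continuousOn.mul (hp 3))
  · refine ContinuousOn.intervalIntegrable ?_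
    rw [uIcc_of_le hab.le]
    exact ((hcont 4 le_rfl).mul p.continuous.continuousOn).sub
      (hu.continuousOn.mul (derivative^[4] p).continuous.continuousOn)

theorem intervalIntegrable_iteratedDerivWithin_mul_eval {n : ℕ} (hab : a < b)
    (hu : ContDiffOn ℝ n u (Icc a b)) (p : ℝ[X]) :
    IntervalIntegrable (fun x => iteratedDerivWithin n u (Icc a b) x * p.eval x) volume a b :=
  ((hu.continuousOn_iteratedDerivWithin le_rfl (uniqueDiffOn_Icc hab)).mul
    p.continuous.continuousOn).intervalIntegrable_of_Icc hab.le

end Green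

noncomputable def clampedWeight : ℝ[X] := X ^ 2 * (1 - X) ^ 2

theorem eval_clampedWeight (x : ℝ) : clampedWeight.eval x = x ^ 2 * (1 - x) ^ 2 := by
  simp [clampedWeight]

theorem eval_derivative_clampedWeight (x : ℝ) :
    (derivative clampedWeight).eval x = 2 * x * (1 - x) * (1 - 2 * x) := by
  simp [clampedWeight, derivative_mul, derivative_pow]
  ring

theorem eval_iterate_derivative_four_clampedWeight (x : ℝ) :
    (derivative^[4] clampedWeight).eval x = 24 := by
  simp only [clampedWeight, Function.iterate_succ, Function.iterate_zero, Function.comp_apply, id]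
  simp [derivative_mul, derivative_pow]
  ring

theorem integral_eval_clampedWeight : ∫ x in (0 : ℝ)..1, clampedWeight.eval x = 1 / 30 := by
  simp_rw [eval_clampedWeight,
    show ∀ x : ℝ, x ^ 2 * (1 - x) ^ 2 = x ^ 2 - 2 * x ^ 3 + x ^ 4 from fun x => by ring]
  rw [intervalIntegral.integral_add, intervalIntegral.integral_sub,
    intervalIntegral.integral_const_mul] <;> norm_num

theorem integral_iteratedDerivWithin_four_mul_clampedWeight {u : ℝ → ℝ}
    (hu : ContDiffOn ℝ 4 u (Icc 0 1)) (h0 : u 0 = 0) (h1 : u 1 = 0)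
    (hd0 : derivWithin u (Icc 0 1) 0 = 0) (hd1 : derivWithin u (Icc 0 1) 1 = 0) :
    ∫ x in (0 : ℝ)..1, iteratedDerivWithin 4 u (Icc 0 1) x * clampedWeight.eval x =
      24 * ∫ x in (0 : ℝ)..1, u x := by
  have h := integral_iteratedDerivWithin_four_mul_eval_sub one_pos hu clampedWeight
  rw [fourthOrderBoundaryTerm_eq_zero h0 hd0 (by simp [eval_clampedWeight])
      (by simp [eval_derivative_clampedWeight]),
    fourthOrderBoundaryTerm_eq_zero h1 hd1 (by simp [eval_clampedWeight])
      (by simp [eval_derivative_clampedWeight]), sub_zero] at h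
  simp_rw [eval_iterate_derivative_four_clampedWeight] at h
  rw [intervalIntegral.integral_sub
      (intervalIntegrable_iteratedDerivWithin_mul_eval one_pos hu clampedWeight)
      ((hu.continuousOn.intervalIntegrable_of_Icc zero_le_one).mul_const 24),
    intervalIntegral.integral_mul_const] at h
  linarith

theorem IsPosSol.mul_le {f : ℝ → ℝ} {r lam K : ℝ} {u : ℝ → ℝ} (hsol : IsPosSol f r lam u)
    (hlam : 0 ≤ lam) (hK : ∀ s ∈ Ico 0 r, K ≤ f s) : lam * K ≤ 720 * r := by
  obtain ⟨hu, hur, heq, h0, h1, hd0, hd1, hnn, -⟩ := hsol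
  have hlower : lam * K / 30 ≤ 24 * ∫ x in (0 : ℝ)..1, u x := by
    rw [← integral_iteratedDerivWithin_four_mul_clampedWeight hu h0 h1 hd0 hd1, ← mul_one_div,
      ← integral_eval_clampedWeight, ← intervalIntegral.integral_const_mul]
    refine intervalIntegral.integral_mono_on zero_le_one
      (clampedWeight.continuous.intervalIntegrable 0 1 |>.const_mul _)
      (intervalIntegrable_iteratedDerivWithin_mul_eval one_pos hu clampedWeight) fun x hx => ?_
    rcases eq_endpoints_or_mem_Ioo_of_mem_Icc hx with rfl | rfl | hx'
    · simp [eval_clampedWeight]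
    · simp [eval_clampedWeight]
    refine mul_le_mul_of_nonneg_right ?_ (by rw [eval_clampedWeight]; positivity)
    rw [heq x hx']
    exact mul_le_mul_of_nonneg_left (hK _ ⟨hnn x hx', hur x hx⟩) hlam
  have hupper : ∫ x in (0 : ℝ)..1, u x ≤ r := by
    simpa using intervalIntegral.integral_mono_on zero_le_one
      (hu.continuousOn.intervalIntegrable_of_Icc (μ := volume) zero_le_one) intervalIntegrable_const
      fun x hx => (hur x hx).le
  linarith

/-- Nonexistence of positive solutions for large `lam`: the set of `lam > 0` admitting a
positive solution with values in `[0, r)` is bounded above. -/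
theorem no_solution_for_large_lambda
    (f : ℝ → ℝ) (r : ℝ) (hr : 0 < r)
    (hf : ContinuousOn f (Set.Ico 0 r))
    (hfpos : ∀ s ∈ Set.Ico (0:ℝ) r, 0 < f s)
    (hlim : ∃ a > (0:ℝ), ∀ᶠ s in nhdsWithin r (Set.Iio r), a ≤ (r - s) * f s) :
    (∃ lam₀ : ℝ, 0 < lam₀ ∧
      ∀ lam : ℝ, lam₀ < lam → ¬ ∃ u : ℝ → ℝ, IsPosSol f r lam u) ∧
    BddAbove {lam : ℝ | 0 < lam ∧ ∃ u : ℝ → ℝ, IsPosSol f r lam u} := by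
  obtain ⟨a, ha, hev⟩ := hlim
  obtain ⟨K, hK, hKf⟩ := exists_pos_forall_le_of_eventually_le_sub_mul hr ha hf hfpos hev
  have hbound (lam : ℝ) (hlam : 0 < lam) : (∃ u, IsPosSol f r lam u) → lam ≤ 720 * r / K :=
    fun ⟨_, hsol⟩ => (le_div_iff₀ hK).2 (hsol.mul_le hlam.le hKf)
  have hlam₀ : 0 < 720 * r / K := by positivity
  exact ⟨⟨720 * r / K, hlam₀, fun lam hlt hsol => (hbound lam (hlam₀.trans hlt) hsol).not_gt hlt⟩,
    ⟨720 * r / K, fun lam ⟨hlam, hsol⟩ => hbound lam hlam hsol⟩⟩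
end

section
/- Let (λ_n) be positive numbers with λ_n → 0 and let u_n be a positive solution of (P_{λ_n}) with u_n(x) < r on [0,1] for each n. Suppose u_n, u_n', u_n'' converge uniformly on [0,1] to w, w', w'' for some twice continuously differentiable function w on [0,1], and suppose max_{x∈[0,1]} w(x) < r. Then w is identically 0 on [0,1]. -/
open Set Filter

/-!
Since `max w < r`, the `u n` eventually take values in a fixed compact `[0, M] ⊂ [0, r)`,
where `f` is bounded by some `K`; hence `|u n''''| ≤ |λ n| K → 0`. By the mean value theorem
`u n'''` is then uniformly close to the slope of `u n''` over `[0, 1]`, so `u n'''` converges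
uniformly to a constant `c`, and the uniform limits of derivatives give `w''' = c` on `(0, 1)`.
A cubic with `w(0) = w(1) = w'(0) = w'(1) = 0` vanishes: three applications of Rolle's theorem
give two zeros of `w''`, hence `c = 0`, and then `w'' = w' = w = 0`.
-/

open Topology

section IntervalCalculus

variable {a b : ℝ}

lemma hasDerivAt_iteratedDerivWithin_Icc_s10 {v : ℝ → ℝ} {N : WithTop ℕ∞} {k : ℕ}
    (hv : ContDiffOn ℝ N v (Icc a b)) (hk : (k : WithTop ℕ∞) < N) {x : ℝ} (hx : x ∈ Ioo a b) :
    HasDerivAt (iteratedDerivWithin k v (Icc a b))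
      (iteratedDerivWithin (k + 1) v (Icc a b) x) x := by
  have hd := hv.differentiableOn_iteratedDerivWithin hk (uniqueDiffOn_Icc (hx.1.trans hx.2)) x
    (Ioo_subset_Icc_self hx)
  rw [iteratedDerivWithin_succ]
  exact hd.hasDerivWithinAt.hasDerivAt (Icc_mem_nhds hx.1 hx.2)

lemma eq_left_of_hasDerivAt_zero {F : ℝ → ℝ} (hF : ContinuousOn F (Icc a b))
    (hF' : ∀ x ∈ Ioo a b, HasDerivAt F 0 x) : ∀ x ∈ Icc a b, F x = F a := by
  intro x hx
  rcases hx.1.eq_or_lt with rfl | hax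
  · rfl
  obtain ⟨-, -, hslope⟩ := exists_hasDerivAt_eq_slope F (fun _ => 0) hax
    (hF.mono (Icc_subset_Icc_right hx.2)) fun y hy => hF' y ⟨hy.1, hy.2.trans_le hx.2⟩
  rw [eq_comm, div_eq_zero_iff, sub_eq_zero, sub_eq_zero] at hslope
  exact hslope.resolve_right hax.ne'

lemma abs_deriv_sub_slope_le {F F' F'' : ℝ → ℝ} {C : ℝ} (hab : a < b)
    (hF : ContinuousOn F (Icc a b)) (hF' : ∀ x ∈ Ioo a b, HasDerivAt F (F' x) x)
    (hF'' : ∀ x ∈ Ioo a b, HasDerivAt F' (F'' x) x) (hC : ∀ x ∈ Ioo a b, |F'' x| ≤ C)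
    {x : ℝ} (hx : x ∈ Ioo a b) : |F' x - slope F a b| ≤ C * (b - a) := by
  obtain ⟨ξ, hξ, hslope⟩ := exists_hasDerivAt_eq_slope F F' hab hF hF'
  rw [slope_def_field, ← hslope]
  have hLip := Convex.norm_image_sub_le_of_norm_hasDerivWithin_le
    (fun y hy => (hF'' y hy).hasDerivWithinAt) hC (convex_Ioo a b) hξ hx
  calc |F' x - F' ξ| ≤ C * |x - ξ| := hLip
    _ ≤ C * (b - a) := by
      refine mul_le_mul_of_nonneg_left ?_ ((abs_nonneg _).trans (hC ξ hξ))
      exact abs_sub_le_iff.2 ⟨by linarith [hx.2, hξ.1], by linarith [hx.1, hξ.2]⟩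

lemma tendstoUniformlyOn_deriv_of_second_deriv_tendsto_zero {ι : Type*} {l : Filter ι}
    {F F' F'' : ι → ℝ → ℝ} {ε : ι → ℝ} {c : ℝ} (hab : a < b)
    (hF : ∀ n, ContinuousOn (F n) (Icc a b))
    (hF' : ∀ n, ∀ x ∈ Ioo a b, HasDerivAt (F n) (F' n x) x)
    (hF'' : ∀ n, ∀ x ∈ Ioo a b, HasDerivAt (F' n) (F'' n x) x)
    (hε : ∀ᶠ n in l, ∀ x ∈ Ioo a b, |F'' n x| ≤ ε n) (hε0 : Tendsto ε l (𝓝 0))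
    (hslope : Tendsto (fun n => slope (F n) a b) l (𝓝 c)) :
    TendstoUniformlyOn F' (fun _ => c) l (Ioo a b) := by
  rw [Metric.tendstoUniformlyOn_iff]
  intro δ hδ
  have hsmall : Tendsto (fun n => ε n * (b - a) + |slope (F n) a b - c|) l (𝓝 0) := by
    simpa using (hε0.mul_const (b - a)).add (hslope.sub_const c).abs
  filter_upwards [hε, hsmall.eventually (gt_mem_nhds hδ)] with n hεn hn x hx
  have hx' := abs_deriv_sub_slope_le hab (hF n) (hF' n) (hF'' n) hεn hx
  rw [Real.dist_eq]
  calc |c - F' n x| ≤ |F' n x - slope (F n) a b| + |slope (F n) a b - c| := by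
        rw [abs_sub_comm c]; exact abs_sub_le _ _ _
    _ < δ := by linarith

lemma eq_zero_of_clamped_of_hasDerivAt_const {w w₁ w₂ : ℝ → ℝ} {c : ℝ} (hab : a < b)
    (hw : ContinuousOn w (Icc a b)) (hw₁ : ContinuousOn w₁ (Icc a b))
    (hw₂ : ContinuousOn w₂ (Icc a b))
    (hw' : ∀ x ∈ Ioo a b, HasDerivAt w (w₁ x) x) (hw₁' : ∀ x ∈ Ioo a b, HasDerivAt w₁ (w₂ x) x)
    (hw₂' : ∀ x ∈ Ioo a b, HasDerivAt w₂ c x)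
    (ha : w a = 0) (hb : w b = 0) (ha₁ : w₁ a = 0) (hb₁ : w₁ b = 0) :
    ∀ x ∈ Icc a b, w x = 0 := by
  obtain ⟨ξ, hξ, hw₁ξ⟩ := exists_hasDerivAt_eq_zero hab hw (ha.trans hb.symm) hw'
  obtain ⟨η₁, hη₁, hw₂η₁⟩ := exists_hasDerivAt_eq_zero hξ.1
    (hw₁.mono (Icc_subset_Icc_right hξ.2.le)) (ha₁.trans hw₁ξ.symm)
    fun x hx => hw₁' x ⟨hx.1, hx.2.trans hξ.2⟩
  obtain ⟨η₂, hη₂, hw₂η₂⟩ := exists_hasDerivAt_eq_zero hξ.2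
    (hw₁.mono (Icc_subset_Icc_left hξ.1.le)) (hw₁ξ.trans hb₁.symm)
    fun x hx => hw₁' x ⟨hξ.1.trans hx.1, hx.2⟩
  obtain ⟨-, -, hc⟩ := exists_hasDerivAt_eq_zero (hη₁.2.trans hη₂.1)
    (hw₂.mono (Icc_subset_Icc hη₁.1.le hη₂.2.le))
    (hw₂η₁.trans hw₂η₂.symm) fun x hx => hw₂' x ⟨hη₁.1.trans hx.1, hx.2.trans hη₂.2⟩
  have hw₂0 : ∀ x ∈ Icc a b, w₂ x = 0 := by
    have hconst := eq_left_of_hasDerivAt_zero hw₂ fun x hx => hc ▸ hw₂' x hx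
    intro x hx
    rw [hconst x hx, ← hconst η₁ ⟨hη₁.1.le, hη₁.2.le.trans hξ.2.le⟩, hw₂η₁]
  have hw₁0 : ∀ x ∈ Icc a b, w₁ x = 0 := fun x hx =>
    (eq_left_of_hasDerivAt_zero hw₁ (fun y hy => hw₂0 y (Ioo_subset_Icc_self hy) ▸ hw₁' y hy)
      x hx).trans ha₁
  exact fun x hx =>
    (eq_left_of_hasDerivAt_zero hw (fun y hy => hw₁0 y (Ioo_subset_Icc_self hy) ▸ hw' y hy)
      x hx).trans ha

lemma hasDerivAt_of_tendstoUniformlyOn_iteratedDerivWithin {ι : Type*} {l : Filter ι} [l.NeBot]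
    {u : ι → ℝ → ℝ} {N : WithTop ℕ∞} {k : ℕ} {F G : ℝ → ℝ}
    (hu : ∀ n, ContDiffOn ℝ N (u n) (Icc a b)) (hk : (k : WithTop ℕ∞) < N)
    (hF : ∀ x ∈ Ioo a b, Tendsto (fun n => iteratedDerivWithin k (u n) (Icc a b) x) l (𝓝 (F x)))
    (hG : TendstoUniformlyOn (fun n => iteratedDerivWithin (k + 1) (u n) (Icc a b)) G l
      (Ioo a b))
    {x : ℝ} (hx : x ∈ Ioo a b) : HasDerivAt F (G x) x :=
  hasDerivAt_of_tendstoUniformlyOn isOpen_Ioo hG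
    (.of_forall fun n _ hy => hasDerivAt_iteratedDerivWithin_Icc_s10 (hu n) hk hy) hF hx

end IntervalCalculus

lemma TendstoUniformlyOn.apply_eq_of_forall_apply_eq {ι α β : Type*} [UniformSpace β]
    [T2Space β] {l : Filter ι} [l.NeBot] {F : ι → α → β} {G : α → β} {s : Set α} {x : α} {c : β}
    (h : TendstoUniformlyOn F G l s) (hx : x ∈ s) (hF : ∀ n, F n x = c) : G x = c :=
  tendsto_nhds_unique ((h.tendsto_at hx).congr hF) tendsto_const_nhds

lemma TendstoUniformlyOn.exists_lt_eventually_le {ι X : Type*} [TopologicalSpace X]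
    {l : Filter ι} {F : ι → X → ℝ} {G : X → ℝ} {s : Set X} {r : ℝ}
    (h : TendstoUniformlyOn F G l s) (hs : IsCompact s) (hG : ContinuousOn G s)
    (hGr : ∀ x ∈ s, G x < r) : ∃ M < r, ∀ᶠ n in l, ∀ x ∈ s, F n x ≤ M := by
  rcases s.eq_empty_or_nonempty with rfl | hne
  · exact ⟨r - 1, by linarith, .of_forall fun _ _ hx => hx.elim⟩
  obtain ⟨x₀, hx₀, hmax⟩ := hs.exists_isMaxOn hne hG
  have hε : 0 < (r - G x₀) / 2 := by linarith [hGr x₀ hx₀]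
  refine ⟨G x₀ + (r - G x₀) / 2, by linarith, ?_⟩
  filter_upwards [Metric.tendstoUniformlyOn_iff.1 h _ hε] with n hn x hx
  have hclose := hn x hx
  rw [Real.dist_eq, abs_lt] at hclose
  linarith [isMaxOn_iff.1 hmax x hx, hclose.1]

namespace IsPosSol

variable {f : ℝ → ℝ} {r lam : ℝ} {u : ℝ → ℝ}

lemma iteratedDerivWithin_eq_zero (hu : IsPosSol f r lam u) {k : ℕ} (hk : k ≤ 1) {x : ℝ}
    (hx : x = 0 ∨ x = 1) : iteratedDerivWithin k u (Icc 0 1) x = 0 := by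
  obtain ⟨-, -, -, h0, h1, h0', h1', -⟩ := hu
  interval_cases k <;> rcases hx with rfl | rfl <;>
    simp only [iteratedDerivWithin_zero, iteratedDerivWithin_one, *]

lemma abs_iteratedDerivWithin_four_le (hu : IsPosSol f r lam u) {M K : ℝ}
    (hM : ∀ x ∈ Icc (0:ℝ) 1, u x ≤ M) (hK : ∀ s ∈ Icc 0 M, |f s| ≤ K) :
    ∀ x ∈ Ioo (0:ℝ) 1, |iteratedDerivWithin 4 u (Icc 0 1) x| ≤ |lam| * K := by
  obtain ⟨-, -, hode, -, -, -, -, hnonneg, -⟩ := hu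
  intro x hx
  rw [hode x hx, abs_mul]
  exact mul_le_mul_of_nonneg_left (hK _ ⟨hnonneg x hx, hM x (Ioo_subset_Icc_self hx)⟩)
    (abs_nonneg _)

end IsPosSol

lemma tendstoUniformlyOn_iteratedDerivWithin_three {ι : Type*} {l : Filter ι} {f : ℝ → ℝ}
    {r : ℝ} {lam : ι → ℝ} {u : ι → ℝ → ℝ} (hu : ∀ n, IsPosSol f r (lam n) (u n))
    (hlam : Tendsto lam l (𝓝 0)) {M K A B : ℝ} (hM : ∀ᶠ n in l, ∀ x ∈ Icc (0:ℝ) 1, u n x ≤ M)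
    (hK : ∀ s ∈ Icc 0 M, |f s| ≤ K)
    (hA : Tendsto (fun n => iteratedDerivWithin 2 (u n) (Icc 0 1) 0) l (𝓝 A))
    (hB : Tendsto (fun n => iteratedDerivWithin 2 (u n) (Icc 0 1) 1) l (𝓝 B)) :
    TendstoUniformlyOn (fun n => iteratedDerivWithin 3 (u n) (Icc 0 1)) (fun _ => B - A) l
      (Ioo 0 1) :=
  tendstoUniformlyOn_deriv_of_second_deriv_tendsto_zero one_pos
    (fun n => (hu n).1.continuousOn_iteratedDerivWithin (by norm_num) (uniqueDiffOn_Icc one_pos))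
    (fun n _ hx => hasDerivAt_iteratedDerivWithin_Icc_s10 (hu n).1 (by norm_num) hx)
    (fun n _ hx => hasDerivAt_iteratedDerivWithin_Icc_s10 (hu n).1 (by norm_num) hx)
    (hM.mono fun n hn => (hu n).abs_iteratedDerivWithin_four_le hn hK)
    (by simpa using hlam.abs.mul_const K)
    (by simpa only [slope_def_field, sub_zero, div_one] using hB.sub hA)

theorem limit_below_singularity_is_zero_general
    (f : ℝ → ℝ) (r : ℝ)
    (hf : ContDiffOn ℝ 1 f (Set.Ico 0 r))
    (lam : ℕ → ℝ)
    (hlam0 : Tendsto lam atTop (nhds 0))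
    (u : ℕ → ℝ → ℝ) (hu : ∀ n, IsPosSol f r (lam n) (u n))
    (w : ℝ → ℝ)
    (hconv : ∀ k : ℕ, k ≤ 2 →
      TendstoUniformlyOn (fun n x => iteratedDerivWithin k (u n) (Set.Icc 0 1) x)
        (iteratedDerivWithin k w (Set.Icc 0 1)) atTop (Set.Icc 0 1))
    (hmax : ∀ x ∈ Set.Icc (0:ℝ) 1, w x < r) :
    ∀ x ∈ Set.Icc (0:ℝ) 1, w x = 0 := by
  have hsmooth n := (hu n).1
  have hcont : ∀ k ≤ 2, ContinuousOn (iteratedDerivWithin k w (Icc 0 1)) (Icc 0 1) :=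
    fun k hk => (hconv k hk).continuousOn (.of_forall fun n =>
      (hsmooth n).continuousOn_iteratedDerivWithin (by exact_mod_cast hk.trans (by norm_num))
        (uniqueDiffOn_Icc one_pos))
  have hlim : ∀ k ≤ 2, ∀ x ∈ Icc (0:ℝ) 1, Tendsto
      (fun n => iteratedDerivWithin k (u n) (Icc 0 1) x) atTop
      (𝓝 (iteratedDerivWithin k w (Icc 0 1) x)) :=
    fun k hk x hx => (hconv k hk).tendsto_at hx
  have hbdry : ∀ k ≤ 1, ∀ x : ℝ, x = 0 ∨ x = 1 → iteratedDerivWithin k w (Icc 0 1) x = 0 :=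
    fun k hk x hx => (hconv k (hk.trans one_le_two)).apply_eq_of_forall_apply_eq
      (by rcases hx with rfl | rfl <;> norm_num)
      fun n => (hu n).iteratedDerivWithin_eq_zero hk hx
  obtain ⟨M, hMr, hM⟩ := (hconv 0 (by norm_num)).exists_lt_eventually_le isCompact_Icc
    (hcont 0 (by norm_num)) (by simpa using hmax)
  obtain ⟨K, hK⟩ :=
    isCompact_Icc.exists_bound_of_continuousOn (hf.continuousOn.mono (Icc_subset_Ico_right hMr))
  have hthird := tendstoUniformlyOn_iteratedDerivWithin_three hu hlam0 (by simpa using hM) hK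
    (hlim 2 le_rfl 0 (by norm_num)) (hlim 2 le_rfl 1 (by norm_num))
  have hderiv : ∀ k < 2, ∀ x ∈ Ioo (0:ℝ) 1, HasDerivAt (iteratedDerivWithin k w (Icc 0 1))
      (iteratedDerivWithin (k + 1) w (Icc 0 1) x) x := fun k hk x hx =>
    hasDerivAt_of_tendstoUniformlyOn_iteratedDerivWithin hsmooth
      (by exact_mod_cast hk.trans (by norm_num))
      (fun y hy => hlim k hk.le y (Ioo_subset_Icc_self hy))
      ((hconv (k + 1) hk).mono Ioo_subset_Icc_self) hx
  have hderiv₂ : ∀ x ∈ Ioo (0:ℝ) 1, HasDerivAt (iteratedDerivWithin 2 w (Icc 0 1)) _ x :=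
    fun x hx => hasDerivAt_of_tendstoUniformlyOn_iteratedDerivWithin hsmooth (by norm_num)
      (fun y hy => hlim 2 le_rfl y (Ioo_subset_Icc_self hy)) hthird hx
  intro x hx
  simpa using eq_zero_of_clamped_of_hasDerivAt_const one_pos (hcont 0 (by norm_num))
    (hcont 1 (by norm_num)) (hcont 2 le_rfl) (hderiv 0 (by norm_num)) (hderiv 1 one_lt_two)
    hderiv₂ (hbdry 0 zero_le_one 0 (.inl rfl)) (hbdry 0 zero_le_one 1 (.inr rfl))
    (hbdry 1 le_rfl 0 (.inl rfl)) (hbdry 1 le_rfl 1 (.inr rfl)) x hx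

/-- If `lam_n → 0`, the solutions `u_n` converge in `C²[0,1]` to `w`, and
`max w < r`, then `w ≡ 0`. -/
theorem limit_below_singularity_is_zero
    (f : ℝ → ℝ) (r : ℝ) (hr : 0 < r)
    (hf : ContDiffOn ℝ 1 f (Set.Ico 0 r))
    (hfpos : ∀ s ∈ Set.Ico (0:ℝ) r, 0 < f s)
    (hf' : ∀ s ∈ Set.Ioo (0:ℝ) r, 0 < derivWithin f (Set.Ico 0 r) s)
    (hlim : ∃ a > (0:ℝ), ∀ᶠ s in nhdsWithin r (Set.Iio r), a ≤ (r - s) * f s)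
    (lam : ℕ → ℝ) (hlampos : ∀ n, 0 < lam n)
    (hlam0 : Tendsto lam atTop (nhds 0))
    (u : ℕ → ℝ → ℝ) (hu : ∀ n, IsPosSol f r (lam n) (u n))
    (w : ℝ → ℝ) (hw : ContDiffOn ℝ 2 w (Set.Icc 0 1))
    (hconv : ∀ k : ℕ, k ≤ 2 →
      TendstoUniformlyOn (fun n x => iteratedDerivWithin k (u n) (Set.Icc 0 1) x)
        (iteratedDerivWithin k w (Set.Icc 0 1)) atTop (Set.Icc 0 1))
    (hmax : ∀ x ∈ Set.Icc (0:ℝ) 1, w x < r) :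
    ∀ x ∈ Set.Icc (0:ℝ) 1, w x = 0 :=
  limit_below_singularity_is_zero_general f r hf lam hlam0 u hu w hconv hmax
end

section
/- Let λ > 0 and let u be a positive solution of (P_λ) with u(x) < r on [0,1]. Then u is symmetric with respect to x = 1/2, i.e., u(x) = u(1−x) for all x ∈ [0,1], and u'(x) > 0 for all x ∈ (0,1/2); in particular u attains its maximum exactly at x = 1/2. -/
/-!
Let `v x = u (1 - x)`. Both `u` and `v` solve `y'''' = λ f(y)`, with the same values of `y` and
`y'` at `0`. The first integral `u''' u' - u''² / 2 - G(u)`, where `G' = λ f`, takes the same value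
at both ends, and `u''(0), u''(1) ≥ 0` because `u ≥ 0` vanishes to second order there; hence
`u''(0) = u''(1)`, i.e. `u` and `v` share `y''` at `0` as well.

Since `λ f` is nondecreasing, `w = u - v` satisfies `w'''' ≥ 0` wherever `w ≥ 0`, so
`w'''(0) > 0` would force `w > 0` on `(0, 1]`, contradicting `w(1) = 0`; likewise
`w'''(0) < 0` is impossible. With `w, w', w'', w'''` all vanishing at `0`, Grönwall's inequality
(`f` is Lipschitz on the range of `u`) gives `w ≡ 0`.

Then `u'''` is strictly increasing (`u'''' > 0`) and vanishes at `1/2` by symmetry, so `u'` is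
strictly concave on `[0, 1/2]` with zeros at both ends, hence positive in between.
-/

open Set Filter Topology
open scoped NNReal

def HasDerivChainOn (D : ℕ → ℝ → ℝ) (n : ℕ) (s : Set ℝ) : Prop :=
  ∀ k < n, ∀ x ∈ s, HasDerivWithinAt (D k) (D (k + 1) x) s x

theorem ContDiffOn.hasDerivChainOn_iteratedDerivWithin {u : ℝ → ℝ} {n : ℕ} {s : Set ℝ}
    (hu : ContDiffOn ℝ n u s) (hs : UniqueDiffOn ℝ s) :
    HasDerivChainOn (fun k => iteratedDerivWithin k u s) n s := by
  intro k hk x hx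
  simp only [iteratedDerivWithin_succ]
  exact (hu.differentiableOn_iteratedDerivWithin (by exact_mod_cast hk) hs x hx).hasDerivWithinAt

theorem ContinuousWithinAt.exists_forall_Icc_pos {g : ℝ → ℝ} {a b : ℝ}
    (hg : ContinuousWithinAt g (Icc a b) a) (hab : a < b) (ha : 0 < g a) :
    ∃ c ∈ Ioc a b, ∀ x ∈ Icc a c, 0 < g x := by
  have hev : ∀ᶠ x in 𝓝[≥] a, 0 < g x := by
    rw [← nhdsWithin_Icc_eq_nhdsGE hab]
    exact hg.eventually (eventually_gt_nhds ha)
  obtain ⟨c, hc, hsub⟩ := mem_nhdsGE_iff_exists_Icc_subset.1 hev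
  exact ⟨min c b, ⟨lt_min hc hab, min_le_right c b⟩,
    fun x hx => hsub ⟨hx.1, hx.2.trans (min_le_left c b)⟩⟩

theorem ContinuousOn.exists_hasDerivAt_Icc {g : ℝ → ℝ} {p q : ℝ} (hg : ContinuousOn g (Icc p q))
    (hpq : p ≤ q) : ∃ G : ℝ → ℝ, ∀ s ∈ Icc p q, HasDerivAt G (g s) s := by
  set g' := IccExtend hpq ((Icc p q).domRestrict g)
  have hext : Continuous g' := hg.domRestrict.Icc_extend'
  refine ⟨fun s => ∫ t in p..s, g' t, fun s hs => ?_⟩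
  have := (hext.integral_hasStrictDerivAt p s).hasDerivAt
  rwa [show g' s = g s from IccExtend_of_mem hpq _ hs] at this

namespace HasDerivChainOn

variable {D E : ℕ → ℝ → ℝ} {n : ℕ} {s : Set ℝ} {a b : ℝ}

theorem mono (h : HasDerivChainOn D n s) {t : Set ℝ} (hts : t ⊆ s) : HasDerivChainOn D n t :=
  fun k hk x hx => (h k hk x (hts hx)).mono hts

theorem of_le (h : HasDerivChainOn D n s) {m : ℕ} (hmn : m ≤ n) : HasDerivChainOn D m s :=
  fun k hk => h k (hk.trans_le hmn)

theorem continuousOn (h : HasDerivChainOn D n s) {k : ℕ} (hk : k < n) : ContinuousOn (D k) s :=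
  fun x hx => (h k hk x hx).continuousWithinAt

theorem neg (h : HasDerivChainOn D n s) : HasDerivChainOn (fun k x => -D k x) n s :=
  fun k hk x hx => (h k hk x hx).neg

theorem sub (hD : HasDerivChainOn D n s) (hE : HasDerivChainOn E n s) :
    HasDerivChainOn (fun k x => D k x - E k x) n s :=
  fun k hk x hx => (hD k hk x hx).sub (hE k hk x hx)

theorem reflect (h : HasDerivChainOn D n s) (c : ℝ) (hs : MapsTo (fun x => c - x) s s) :
    HasDerivChainOn (fun k x => (-1) ^ k * D k (c - x)) n s := by
  intro k hk x hx
  have hcomp := (h k hk (c - x) (hs hx)).comp x ((hasDerivAt_id x).const_sub c).hasDerivWithinAt hs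
  exact (hcomp.const_mul ((-1) ^ k)).congr_deriv (by ring)

theorem tail (h : HasDerivChainOn D (n + 1) s) : HasDerivChainOn (fun k => D (k + 1)) n s :=
  fun k hk => h (k + 1) (by omega)

theorem strictMonoOn (h : HasDerivChainOn D n (Icc a b)) {k : ℕ} (hk : k < n)
    (hpos : ∀ x ∈ Ioo a b, 0 < D (k + 1) x) : StrictMonoOn (D k) (Icc a b) := by
  refine strictMonoOn_of_hasDerivWithinAt_pos (f' := D (k + 1)) (convex_Icc a b)
    (h.continuousOn hk) ?_ ?_ <;> rw [interior_Icc]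
  · exact fun x hx => (h k hk x (Ioo_subset_Icc_self hx)).mono Ioo_subset_Icc_self
  · exact hpos

theorem monotoneOn (h : HasDerivChainOn D n (Icc a b)) {k : ℕ} (hk : k < n)
    (hnonneg : ∀ x ∈ Ioo a b, 0 ≤ D (k + 1) x) : MonotoneOn (D k) (Icc a b) := by
  refine monotoneOn_of_hasDerivWithinAt_nonneg (f' := D (k + 1)) (convex_Icc a b)
    (h.continuousOn hk) ?_ ?_ <;> rw [interior_Icc]
  · exact fun x hx => (h k hk x (Ioo_subset_Icc_self hx)).mono Ioo_subset_Icc_self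
  · exact hnonneg

theorem strictAntiOn (h : HasDerivChainOn D n (Icc a b)) {k : ℕ} (hk : k < n)
    (hneg : ∀ x ∈ Ioo a b, D (k + 1) x < 0) : StrictAntiOn (D k) (Icc a b) := by
  refine strictAntiOn_of_hasDerivWithinAt_neg (f' := D (k + 1)) (convex_Icc a b)
    (h.continuousOn hk) ?_ ?_ <;> rw [interior_Icc]
  · exact fun x hx => (h k hk x (Ioo_subset_Icc_self hx)).mono Ioo_subset_Icc_self
  · exact hneg

theorem pos_of_nonneg_of_last_pos (h : HasDerivChainOn D n (Icc a b)) (hinit : ∀ k < n, 0 ≤ D k a)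
    (hpos : ∀ x ∈ Ioo a b, 0 < D n x) : ∀ k < n, ∀ x ∈ Ioc a b, 0 < D k x := by
  have step : ∀ k < n, (∀ x ∈ Ioo a b, 0 < D (k + 1) x) → ∀ x ∈ Ioc a b, 0 < D k x :=
    fun k hk hpos' x hx => (hinit k hk).trans_lt <| h.strictMonoOn hk hpos'
      (left_mem_Icc.2 (hx.1.le.trans hx.2)) (Ioc_subset_Icc_self hx) hx.1
  have hIoo : ∀ k ≤ n, ∀ x ∈ Ioo a b, 0 < D k x := fun k hk =>
    Nat.decreasingInduction (motive := fun k _ => ∀ x ∈ Ioo a b, 0 < D k x)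
      (fun k hk ih x hx => step k hk ih x (Ioo_subset_Ioc_self hx)) hpos hk
  exact fun k hk => step k hk (hIoo (k + 1) hk)

theorem nonneg_second_of_nonneg (h : HasDerivChainOn D 2 (Icc a b)) (hab : a < b)
    (h2 : ContinuousWithinAt (D 2) (Icc a b) a) (h0 : D 0 a = 0) (h1 : D 1 a = 0)
    (hnonneg : ∀ x ∈ Ioo a b, 0 ≤ D 0 x) : 0 ≤ D 2 a := by
  by_contra! hneg
  obtain ⟨c, hc, hc_neg⟩ := h2.neg.exists_forall_Icc_pos hab (neg_pos.2 hneg)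
  have hinit : ∀ k < 2, 0 ≤ -D k a := by
    intro k hk
    interval_cases k <;> simp [h0, h1]
  have hmid := (h.neg.mono (Icc_subset_Icc_right hc.2)).pos_of_nonneg_of_last_pos hinit
    (fun x hx => hc_neg x (Ioo_subset_Icc_self hx)) 0 two_pos ((a + c) / 2)
    ⟨by linarith [hc.1], by linarith [hc.1]⟩
  have := hnonneg ((a + c) / 2) ⟨by linarith [hc.1], by linarith [hc.1, hc.2]⟩
  simp only [neg_pos] at hmid
  linarith

theorem pos_of_third_pos_of_fourth_nonneg (h : HasDerivChainOn D 4 (Icc a b))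
    (hinit : ∀ k < 3, 0 ≤ D k a) (h3 : 0 < D 3 a) (hD4 : ∀ x ∈ Ioo a b, 0 ≤ D 0 x → 0 ≤ D 4 x) :
    ∀ x ∈ Ioc a b, 0 < D 0 x := by
  set good : Set ℝ := (fun t => (D 0 t, D 1 t, D 2 t, D 3 t)) ⁻¹'
    (Ici 0 ×ˢ Ici 0 ×ˢ Ici 0 ×ˢ Ici (D 3 a))
  have hgood : ∀ t, t ∈ good ↔ (∀ k < 3, 0 ≤ D k t) ∧ D 3 a ≤ D 3 t := by
    intro t
    simp only [good, mem_preimage, mem_prod, mem_Ici]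
    constructor
    · rintro ⟨h0, h1, h2, h3⟩
      exact ⟨fun k hk => by interval_cases k <;> assumption, h3⟩
    · rintro ⟨hk, h3⟩
      exact ⟨hk 0 (by norm_num), hk 1 (by norm_num), hk 2 (by norm_num), h3⟩
  have hclosed : IsClosed (good ∩ Icc a b) := by
    rw [inter_comm]
    refine ContinuousOn.preimage_isClosed_of_isClosed ?_ isClosed_Icc
      (isClosed_Ici.prod (isClosed_Ici.prod (isClosed_Ici.prod isClosed_Ici)))
    exact (h.continuousOn (by norm_num)).prodMk ((h.continuousOn (by norm_num)).prodMk
      ((h.continuousOn (by norm_num)).prodMk (h.continuousOn (by norm_num))))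
  -- At a good point `D 3` is still positive, so on a short interval `D 2, D 1, D 0` become
  -- positive, hence `D 4 ≥ 0` there and `D 3` does not decrease: the interval stays good.
  have hstep : ∀ x ∈ good ∩ Ico a b, good ∈ 𝓝[>] x := by
    rintro x ⟨hx, hxab⟩
    rw [hgood] at hx
    have hsub : Icc x b ⊆ Icc a b := Icc_subset_Icc_left hxab.1
    obtain ⟨c, hc, hc_pos⟩ :=
      ((h.continuousOn (by norm_num) x (Ico_subset_Icc_self hxab)).mono hsub).exists_forall_Icc_pos
        hxab.2 (h3.trans_le hx.2)
    have hxc : HasDerivChainOn D 4 (Icc x c) := h.mono ((Icc_subset_Icc_right hc.2).trans hsub)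
    have hpos := (hxc.of_le (by norm_num)).pos_of_nonneg_of_last_pos hx.1
      (fun y hy => hc_pos y (Ioo_subset_Icc_self hy))
    have hmono : MonotoneOn (D 3) (Icc x c) := hxc.monotoneOn (by norm_num) fun y hy =>
      hD4 y ⟨hxab.1.trans_lt hy.1, hy.2.trans_le hc.2⟩
        (hpos 0 (by norm_num) y (Ioo_subset_Ioc_self hy)).le
    refine mem_of_superset (Ioc_mem_nhdsGT hc.1) fun y hy => (hgood y).2
      ⟨fun k hk => (hpos k hk y hy).le, hx.2.trans ?_⟩
    exact hmono (left_mem_Icc.2 hc.1.le) (Ioc_subset_Icc_self hy) hy.1.le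
  intro x hx
  have hall : Icc a b ⊆ good := hclosed.Icc_subset_of_forall_mem_nhdsWithin
    ((hgood a).2 ⟨hinit, le_rfl⟩) hstep
  exact (h.of_le (by norm_num)).pos_of_nonneg_of_last_pos hinit
    (fun y hy => h3.trans_le ((hgood y).1 (hall (Ioo_subset_Icc_self hy))).2) 0 (by norm_num)
    x hx

theorem eq_zero_of_abs_le {K : ℝ} (h : HasDerivChainOn D n (Icc a b))
    (hinit : ∀ k < n, D k a = 0) (hbound : ∀ x ∈ Ico a b, |D n x| ≤ K * |D 0 x|) :
    ∀ k < n, ∀ x ∈ Icc a b, D k x = 0 := by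
  rcases n with _ | n
  · simp
  let W : ℝ → Fin (n + 1) → ℝ := fun x (i : Fin (n + 1)) => D i x
  have hW : ∀ x ∈ Icc a b, W x = 0 := by
    refine eq_zero_of_abs_deriv_le_mul_abs_self_of_eq_zero_right
      (f' := fun x (i : Fin (n + 1)) => D (i + 1) x) (K := max K 1)
      (continuousOn_pi.2 fun i => h.continuousOn i.2) (fun x hx => ?_)
      (funext fun i => hinit i i.2) (fun x hx => ?_)
    · exact hasDerivWithinAt_pi.2 fun i =>
        (h i i.2 x (Ico_subset_Icc_self hx)).mono_of_mem_nhdsWithin (Icc_mem_nhdsGE_of_mem hx)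
    · have hW0 : 0 ≤ max K 1 * ‖W x‖ := by positivity
      refine (pi_norm_le_iff_of_nonneg hW0).2 fun i => ?_
      rcases (Nat.lt_succ_iff.1 i.2).lt_or_eq with hi | hi
      · calc ‖D (i + 1) x‖ = ‖W x ⟨i + 1, by omega⟩‖ := rfl
          _ ≤ ‖W x‖ := norm_le_pi_norm _ _
          _ ≤ max K 1 * ‖W x‖ := le_mul_of_one_le_left (norm_nonneg _) (le_max_right K 1)
      · calc ‖D (i + 1) x‖ = |D (n + 1) x| := by rw [hi, Real.norm_eq_abs]
          _ ≤ K * |D 0 x| := hbound x hx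
          _ ≤ max K 1 * ‖W x 0‖ := mul_le_mul (le_max_left K 1) le_rfl (abs_nonneg _)
            (by positivity)
          _ ≤ max K 1 * ‖W x‖ := mul_le_mul_of_nonneg_left (norm_le_pi_norm _ _) (by positivity)
  exact fun k hk x hx => congrFun (hW x hx) ⟨k, hk⟩

theorem energy_eq (h : HasDerivChainOn D 4 (Icc a b)) (hab : a ≤ b) {G : ℝ → ℝ}
    (hG : ∀ x ∈ Icc a b, HasDerivAt G (D 4 x) (D 0 x)) :
    D 3 b * D 1 b - D 2 b ^ 2 / 2 - G (D 0 b) = D 3 a * D 1 a - D 2 a ^ 2 / 2 - G (D 0 a) := by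
  set H : ℝ → ℝ := fun x => D 3 x * D 1 x - D 2 x ^ 2 / 2 - G (D 0 x)
  have hH : ∀ x ∈ Icc a b, HasDerivWithinAt H 0 (Icc a b) x := fun x hx =>
    ((((h 3 (by norm_num) x hx).mul (h 1 (by norm_num) x hx)).sub
      (((h 2 (by norm_num) x hx).pow 2).div_const 2)).sub
      ((hG x hx).comp_hasDerivWithinAt x (h 0 (by norm_num) x hx))).congr_deriv (by ring)
  exact constant_of_has_deriv_right_zero (fun x hx => (hH x hx).continuousWithinAt)
    (fun x hx => (hH x (Ico_subset_Icc_self hx)).mono_of_mem_nhdsWithin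
      (Icc_mem_nhdsGE_of_mem hx)) b (right_mem_Icc.2 hab)

theorem eq_of_monotoneOn_of_lipschitzOnWith (hD : HasDerivChainOn D 4 (Icc a b))
    (hE : HasDerivChainOn E 4 (Icc a b)) (hab : a < b) {g : ℝ → ℝ} {S : Set ℝ} {K : ℝ≥0}
    (hmono : MonotoneOn g S) (hlip : LipschitzOnWith K g S) (hDS : ∀ x ∈ Icc a b, D 0 x ∈ S)
    (hES : ∀ x ∈ Icc a b, E 0 x ∈ S)
    (hD4 : ∀ x ∈ Icc a b, D 4 x = g (D 0 x)) (hE4 : ∀ x ∈ Icc a b, E 4 x = g (E 0 x))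
    (hinit : ∀ k < 3, D k a = E k a) (hb : D 0 b = E 0 b) :
    ∀ k < 4, ∀ x ∈ Icc a b, D k x = E k x := by
  set W : ℕ → ℝ → ℝ := fun k x => D k x - E k x
  have hW : HasDerivChainOn W 4 (Icc a b) := hD.sub hE
  have hW4 : ∀ x ∈ Icc a b, W 4 x = g (D 0 x) - g (E 0 x) := fun x hx => by
    simp only [W, hD4 x hx, hE4 x hx]
  have hWinit : ∀ k < 3, W k a = 0 := fun k hk => sub_eq_zero.2 (hinit k hk)
  have hWb : W 0 b = 0 := sub_eq_zero.2 hb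
  have hb_mem : b ∈ Ioc a b := ⟨hab, le_rfl⟩
  have hsign : ∀ x ∈ Icc a b, 0 ≤ W 0 x → 0 ≤ W 4 x := fun x hx hx0 => by
    rw [hW4 x hx, sub_nonneg]
    exact hmono (hES x hx) (hDS x hx) (sub_nonneg.1 hx0)
  have hsign' : ∀ x ∈ Icc a b, W 0 x ≤ 0 → W 4 x ≤ 0 := fun x hx hx0 => by
    rw [hW4 x hx, sub_nonpos]
    exact hmono (hDS x hx) (hES x hx) (sub_nonpos.1 hx0)
  -- By the comparison principle, a nonzero `W 3 a` would make `W 0 b` nonzero.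
  have hW3 : W 3 a = 0 := by
    refine le_antisymm (not_lt.1 fun hpos => ?_) (not_lt.1 fun hneg => ?_)
    · exact (hW.pos_of_third_pos_of_fourth_nonneg (fun k hk => (hWinit k hk).ge) hpos
        (fun x hx => hsign x (Ioo_subset_Icc_self hx)) b hb_mem).ne' hWb
    · exact (hW.neg.pos_of_third_pos_of_fourth_nonneg (fun k hk => by simp [hWinit k hk])
        (neg_pos.2 hneg)
        (fun x hx hx0 => neg_nonneg.2 (hsign' x (Ioo_subset_Icc_self hx) (neg_nonneg.1 hx0)))
        b hb_mem).ne' (by simp [hWb])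
  have hzero := hW.eq_zero_of_abs_le (K := K)
    (fun k hk => if h3 : k < 3 then hWinit k h3 else by rwa [show k = 3 by omega])
    fun x hx => by
      have hx' := Ico_subset_Icc_self hx
      simpa only [hW4 x hx', W, ← Real.dist_eq] using
        hlip.dist_le_mul _ (hDS x hx') _ (hES x hx')
  exact fun k hk x hx => sub_eq_zero.1 (hzero k hk x hx)

theorem pos_of_second_neg (h : HasDerivChainOn D 2 (Icc a b)) (ha : D 0 a = 0) (hb : D 0 b = 0)
    (hneg : ∀ x ∈ Ioo a b, D 2 x < 0) : ∀ x ∈ Ioo a b, 0 < D 0 x := by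
  intro x hx
  have hab : a < b := hx.1.trans hx.2
  have hderiv : EqOn (D 1) (deriv (D 0)) (Ioo a b) := fun y hy =>
    ((h 0 two_pos y (Ioo_subset_Icc_self hy)).hasDerivAt (Icc_mem_nhds hy.1 hy.2)).deriv.symm
  have hconc : StrictConcaveOn ℝ (Icc a b) (D 0) := by
    refine StrictAntiOn.strictConcaveOn_of_deriv (convex_Icc a b) (h.continuousOn two_pos) ?_
    rw [interior_Icc]
    exact ((h.strictAntiOn one_lt_two hneg).mono Ioo_subset_Icc_self).congr hderiv
  simpa [ha, hb] using hconc.lt_on_openSegment (left_mem_Icc.2 hab.le) (right_mem_Icc.2 hab.le)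
    hab.ne (by rwa [openSegment_eq_Ioo hab])

end HasDerivChainOn

theorem mapsTo_one_sub_Icc : MapsTo (fun x : ℝ => 1 - x) (Icc 0 1) (Icc 0 1) :=
  fun x hx => ⟨by linarith [hx.2], by linarith [hx.1]⟩

theorem ContDiffOn.strictMonoOn_of_derivWithin_pos {f : ℝ → ℝ} {a b : ℝ}
    (hf : ContDiffOn ℝ 1 f (Ico a b)) (hf' : ∀ s ∈ Ioo a b, 0 < derivWithin f (Ico a b) s) :
    StrictMonoOn f (Ico a b) := by
  refine strictMonoOn_of_hasDerivWithinAt_pos (f' := derivWithin f (Ico a b)) (convex_Ico a b)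
    hf.continuousOn (fun s hs => ?_) (by rwa [interior_Ico])
  rw [interior_Ico] at hs ⊢
  exact (hf.differentiableOn one_ne_zero s (Ioo_subset_Ico_self hs)).hasDerivWithinAt.mono
    Ioo_subset_Ico_self

namespace IsPosSol

variable {f : ℝ → ℝ} {r lam : ℝ} {u : ℝ → ℝ}

theorem hasDerivChainOn (hu : IsPosSol f r lam u) :
    HasDerivChainOn (fun k => iteratedDerivWithin k u (Icc 0 1)) 4 (Icc 0 1) :=
  ContDiffOn.hasDerivChainOn_iteratedDerivWithin (n := 4) hu.1 (uniqueDiffOn_Icc one_pos)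

theorem mapsTo_Ico (hu : IsPosSol f r lam u) : MapsTo u (Icc 0 1) (Ico 0 r) := by
  obtain ⟨-, hr, -, h0, h1, -, -, hnonneg, -⟩ := hu
  intro x hx
  refine ⟨?_, hr x hx⟩
  rcases hx.1.eq_or_lt with rfl | hx0
  · exact h0.ge
  rcases hx.2.eq_or_lt with rfl | hx1
  · exact h1.ge
  exact hnonneg x ⟨hx0, hx1⟩

theorem exists_mapsTo_Icc (hu : IsPosSol f r lam u) : ∃ M < r, MapsTo u (Icc 0 1) (Icc 0 M) := by
  obtain ⟨xM, hxM, hmax⟩ :=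
    isCompact_Icc.exists_isMaxOn (nonempty_Icc.2 zero_le_one) hu.1.continuousOn
  exact ⟨u xM, (hu.mapsTo_Ico hxM).2, fun x hx => ⟨(hu.mapsTo_Ico hx).1, hmax hx⟩⟩

theorem iteratedDerivWithin_four_eq (hu : IsPosSol f r lam u) (hf : ContinuousOn f (Ico 0 r)) :
    ∀ x ∈ Icc (0 : ℝ) 1, iteratedDerivWithin 4 u (Icc 0 1) x = lam * f (u x) := by
  have ⟨hC4, _, hode, _⟩ := hu
  exact EqOn.of_subset_closure hode
    (hC4.continuousOn_iteratedDerivWithin le_rfl (uniqueDiffOn_Icc one_pos))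
    (continuousOn_const.mul (hf.comp hC4.continuousOn hu.mapsTo_Ico)) Ioo_subset_Icc_self
    (by rw [closure_Ioo zero_ne_one])

theorem iteratedDerivWithin_two_zero_eq_one (hu : IsPosSol f r lam u)
    (hf : ContinuousOn f (Ico 0 r)) :
    iteratedDerivWithin 2 u (Icc 0 1) 0 = iteratedDerivWithin 2 u (Icc 0 1) 1 := by
  have hD := hu.hasDerivChainOn
  have hE := hD.reflect 1 mapsTo_one_sub_Icc
  have ⟨_, _, _, h0, h1, h10, h11, hnonneg, _⟩ := hu
  obtain ⟨M, hMr, hM⟩ := hu.exists_mapsTo_Icc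
  have hfM : ContinuousOn (fun s => lam * f s) (Icc 0 M) :=
    continuousOn_const.mul (hf.mono fun s hs => ⟨hs.1, hs.2.trans_lt hMr⟩)
  obtain ⟨G, hG⟩ :=
    hfM.exists_hasDerivAt_Icc (nonempty_Icc.1 ⟨u 0, hM (left_mem_Icc.2 zero_le_one)⟩)
  have henergy := hD.energy_eq zero_le_one (G := G) fun x hx => by
    rw [hu.iteratedDerivWithin_four_eq hf x hx]
    exact hG _ (hM hx)
  simp only [iteratedDerivWithin_zero, iteratedDerivWithin_one, h0, h1, h10, h11, mul_zero,
    zero_sub, sub_left_inj, neg_inj] at henergy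
  have hsign0 : 0 ≤ iteratedDerivWithin 2 u (Icc 0 1) 0 :=
    (hD.of_le (by norm_num)).nonneg_second_of_nonneg zero_lt_one
      (hD.continuousOn (by norm_num) 0 (left_mem_Icc.2 zero_le_one)) h0
      (by rwa [iteratedDerivWithin_one]) hnonneg
  have hsign1 : 0 ≤ iteratedDerivWithin 2 u (Icc 0 1) 1 := by
    simpa using (hE.of_le (by norm_num)).nonneg_second_of_nonneg zero_lt_one
      (hE.continuousOn (by norm_num) 0 (left_mem_Icc.2 zero_le_one)) (by simpa using h1)
      (by simpa [iteratedDerivWithin_one] using h11)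
      (fun x hx => by simpa using (hu.mapsTo_Ico (mapsTo_one_sub_Icc (Ioo_subset_Icc_self hx))).1)
  exact (pow_left_inj₀ hsign0 hsign1 two_ne_zero).1 (by linarith)

theorem iteratedDerivWithin_eq_reflect (hu : IsPosSol f r lam u)
    (hf : ContDiffOn ℝ 1 f (Ico 0 r)) (hmono : MonotoneOn f (Ico 0 r)) (hlam : 0 ≤ lam) :
    ∀ k < 4, ∀ x ∈ Icc (0 : ℝ) 1, iteratedDerivWithin k u (Icc 0 1) x =
      (-1) ^ k * iteratedDerivWithin k u (Icc 0 1) (1 - x) := by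
  have hD := hu.hasDerivChainOn
  have h4 := hu.iteratedDerivWithin_four_eq hf.continuousOn
  have h2 := hu.iteratedDerivWithin_two_zero_eq_one hf.continuousOn
  have ⟨_, _, _, h0, h1, h10, h11, _, _⟩ := hu
  obtain ⟨M, hMr, hM⟩ := hu.exists_mapsTo_Icc
  have hMIco : Icc 0 M ⊆ Ico 0 r := fun s hs => ⟨hs.1, hs.2.trans_lt hMr⟩
  obtain ⟨K, hlip⟩ := ((contDiffOn_const (c := lam)).mul (hf.mono hMIco)).exists_lipschitzOnWith
    one_ne_zero (convex_Icc 0 M) isCompact_Icc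
  refine hD.eq_of_monotoneOn_of_lipschitzOnWith (hD.reflect 1 mapsTo_one_sub_Icc) zero_lt_one
    (g := fun s => lam * f s) (fun s hs t ht hst => mul_le_mul_of_nonneg_left
      (hmono (hMIco hs) (hMIco ht) hst) hlam) hlip hM
    (fun x hx => by simpa using hM (mapsTo_one_sub_Icc hx)) h4
    (fun x hx => by norm_num [h4 _ (mapsTo_one_sub_Icc hx)]) (fun k hk => ?_) (by simp [h0, h1])
  interval_cases k
  · simp [h0, h1]
  · simp [iteratedDerivWithin_one, h10, h11]
  · simp [h2]

theorem iteratedDerivWithin_one_pos (hu : IsPosSol f r lam u) (hf : ContinuousOn f (Ico 0 r))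
    (hfpos : ∀ s ∈ Ico (0 : ℝ) r, 0 < f s) (hlam : 0 < lam)
    (hsymm : ∀ k < 4, ∀ x ∈ Icc (0 : ℝ) 1, iteratedDerivWithin k u (Icc 0 1) x =
      (-1) ^ k * iteratedDerivWithin k u (Icc 0 1) (1 - x)) :
    ∀ x ∈ Ioo (0 : ℝ) (1 / 2), 0 < iteratedDerivWithin 1 u (Icc 0 1) x := by
  have hD := hu.hasDerivChainOn
  have ⟨_, _, _, _, _, h10, _, _, _⟩ := hu
  have hhalf : (1 / 2 : ℝ) ∈ Icc 0 1 := by norm_num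
  have hsub : Icc (0 : ℝ) (1 / 2) ⊆ Icc 0 1 := Icc_subset_Icc_right (by norm_num)
  have hodd : ∀ k < 4, Odd k → iteratedDerivWithin k u (Icc 0 1) (1 / 2) = 0 := by
    intro k hk hodd
    have := hsymm k hk (1 / 2) hhalf
    rw [show (1 : ℝ) - 1 / 2 = 1 / 2 by norm_num, hodd.neg_one_pow] at this
    linarith
  have hD3mono : StrictMonoOn (iteratedDerivWithin 3 u (Icc 0 1)) (Icc 0 1) :=
    hD.strictMonoOn (k := 3) (by norm_num) fun x hx => by
      rw [hu.iteratedDerivWithin_four_eq hf x (Ioo_subset_Icc_self hx)]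
      exact mul_pos hlam (hfpos _ (hu.mapsTo_Ico (Ioo_subset_Icc_self hx)))
  refine ((hD.tail.of_le (by norm_num : 2 ≤ 3)).mono hsub).pos_of_second_neg
    (by simpa [iteratedDerivWithin_one] using h10) (hodd 1 (by norm_num) odd_one) fun x hx => ?_
  exact (hD3mono (hsub (Ioo_subset_Icc_self hx)) hhalf hx.2).trans_eq
    (hodd 3 (by norm_num) (by decide))

end IsPosSol

theorem solutions_symmetric_general
    (f : ℝ → ℝ) (r : ℝ)
    (hf : ContDiffOn ℝ 1 f (Set.Ico 0 r))
    (hfpos : ∀ s ∈ Set.Ico (0:ℝ) r, 0 < f s)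
    (hf' : ∀ s ∈ Set.Ioo (0:ℝ) r, 0 < derivWithin f (Set.Ico 0 r) s)
    (lam : ℝ) (hlam : 0 < lam)
    (u : ℝ → ℝ) (hu : IsPosSol f r lam u) :
    (∀ x ∈ Set.Icc (0:ℝ) 1, u x = u (1 - x)) ∧
    (∀ x ∈ Set.Ioo (0:ℝ) (1 / 2), 0 < derivWithin u (Set.Icc 0 1) x) ∧
    (∀ x ∈ Set.Icc (0:ℝ) 1, x ≠ 1 / 2 → u x < u (1 / 2)) := by
  have hsymm := hu.iteratedDerivWithin_eq_reflect hf
    (hf.strictMonoOn_of_derivWithin_pos hf').monotoneOn hlam.le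
  have hsymm0 : ∀ x ∈ Icc (0 : ℝ) 1, u x = u (1 - x) := fun x hx => by
    simpa using hsymm 0 (by norm_num) x hx
  have hpos := hu.iteratedDerivWithin_one_pos hf.continuousOn hfpos hlam hsymm
  have hinc : StrictMonoOn u (Icc 0 (1 / 2)) := by
    simpa using (hu.hasDerivChainOn.mono (Icc_subset_Icc_right (by norm_num))).strictMonoOn
      (k := 0) (by norm_num) hpos
  refine ⟨hsymm0, fun x hx => by simpa [iteratedDerivWithin_one] using hpos x hx,
    fun x hx hne => ?_⟩
  rcases hne.lt_or_gt with hlt | hgt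
  · exact hinc ⟨hx.1, hlt.le⟩ ⟨by norm_num, le_rfl⟩ hlt
  · rw [hsymm0 x hx]
    exact hinc ⟨by linarith [hx.2], by linarith⟩ ⟨by norm_num, le_rfl⟩ (by linarith)

/-- Any positive solution is symmetric about `x = 1/2`, strictly increasing on
`(0, 1/2)`, and attains its maximum exactly at `x = 1/2`. -/
theorem solutions_symmetric
    (f : ℝ → ℝ) (r : ℝ) (hr : 0 < r)
    (hf : ContDiffOn ℝ 1 f (Set.Ico 0 r))
    (hfpos : ∀ s ∈ Set.Ico (0:ℝ) r, 0 < f s)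
    (hf' : ∀ s ∈ Set.Ioo (0:ℝ) r, 0 < derivWithin f (Set.Ico 0 r) s)
    (lam : ℝ) (hlam : 0 < lam)
    (u : ℝ → ℝ) (hu : IsPosSol f r lam u) :
    (∀ x ∈ Set.Icc (0:ℝ) 1, u x = u (1 - x)) ∧
    (∀ x ∈ Set.Ioo (0:ℝ) (1 / 2), 0 < derivWithin u (Set.Icc 0 1) x) ∧
    (∀ x ∈ Set.Icc (0:ℝ) 1, x ≠ 1 / 2 → u x < u (1 / 2)) :=
  solutions_symmetric_general f r hf hfpos hf' lam hlam u hu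
end
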